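/- arXiv:1605.00125 — 10 statements merged into one kernel-verified Lean document; each statement's English description precedes it below -/
import Mathlib

section
/- Let h : R^m → R be convex and L-Lipschitz, g : R^d → R∪{∞} proper closed convex, and c : R^d → R^m be C¹-smooth with β-Lipschitz Jacobian. Define F(x) = g(x) + h(c(x)) and the linearized model F(z;y) = g(z) + h(c(y) + ∇c(y)(z−y)). Then for all z, y ∈ dom g, |F(z) − F(z;y)| ≤ (Lβ/2)‖z−y‖². -/
open Set

section LinearizationError

variable {E F : Type*} [NormedAddCommGroup E] [NormedSpace ℝ E]
  [NormedAddCommGroup F] [NormedSpace ℝ F] {c : E → F}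

theorem hasDerivAt_sub_linearization_along_line (hc : Differentiable ℝ c) (y v : E) (t : ℝ) :
    HasDerivAt (fun s : ℝ => c (y + s • v) - c y - s • fderiv ℝ c y v)
      ((fderiv ℝ c (y + t • v) - fderiv ℝ c y) v) t := by
  have hline : HasDerivAt (fun s : ℝ => y + s • v) v t := by
    simpa using ((hasDerivAt_id t).smul_const v).const_add y
  have hcomp := (hc (y + t • v)).hasFDerivAt.comp_hasDerivAt t hline
  refine ((hcomp.sub_const (c y)).sub ((hasDerivAt_id t).smul_const (fderiv ℝ c y v))).congr_deriv ?_
  simp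

/-- Comparing `t ↦ c (y + t • (z - y)) - c y - t • Dc(y)(z - y)` with `t ↦ β/2 ‖z - y‖² t²`,
whose derivative dominates by the Lipschitz bound on `Dc`. -/
theorem norm_sub_sub_fderiv_le_of_lipschitz_fderiv {β : ℝ} (hc : Differentiable ℝ c)
    (hcβ : ∀ x y, ‖fderiv ℝ c x - fderiv ℝ c y‖ ≤ β * ‖x - y‖) (z y : E) :
    ‖c z - c y - fderiv ℝ c y (z - y)‖ ≤ β / 2 * ‖z - y‖ ^ 2 := by
  set v := z - y
  have hquad (t : ℝ) : HasDerivAt (fun s : ℝ => β / 2 * ‖v‖ ^ 2 * s ^ 2) (β * ‖v‖ ^ 2 * t) t := by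
    refine ((hasDerivAt_pow 2 t).const_mul (β / 2 * ‖v‖ ^ 2)).congr_deriv ?_
    ring
  have hbound (t : ℝ) (ht : t ∈ Ico (0 : ℝ) 1) :
      ‖(fderiv ℝ c (y + t • v) - fderiv ℝ c y) v‖ ≤ β * ‖v‖ ^ 2 * t :=
    calc ‖(fderiv ℝ c (y + t • v) - fderiv ℝ c y) v‖
        ≤ ‖fderiv ℝ c (y + t • v) - fderiv ℝ c y‖ * ‖v‖ := ContinuousLinearMap.le_opNorm _ _
      _ ≤ β * ‖(y + t • v) - y‖ * ‖v‖ := by gcongr; exact hcβ _ _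
      _ = β * ‖v‖ ^ 2 * t := by
        rw [add_sub_cancel_left, norm_smul, Real.norm_of_nonneg ht.1]; ring
  have hderiv := hasDerivAt_sub_linearization_along_line hc y v
  have := image_norm_le_of_norm_deriv_right_le_deriv_boundary
    (fun t _ => (hderiv t).continuousAt.continuousWithinAt)
    (fun t _ => (hderiv t).hasDerivWithinAt) (by simp) hquad hbound
    (right_mem_Icc.mpr zero_le_one)
  simpa [v] using this

end LinearizationError

theorem composite_model_error_general {d m : ℕ}
    (g : EuclideanSpace ℝ (Fin d) → ℝ)
    (h : EuclideanSpace ℝ (Fin m) → ℝ)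
    (c : EuclideanSpace ℝ (Fin d) → EuclideanSpace ℝ (Fin m))
    (L β : ℝ) (hL : 0 ≤ L)
    (hhL : ∀ u v, |h u - h v| ≤ L * ‖u - v‖)
    (hc : ContDiff ℝ 1 c)
    (hcβ : ∀ x y, ‖fderiv ℝ c x - fderiv ℝ c y‖ ≤ β * ‖x - y‖) :
    ∀ z y : EuclideanSpace ℝ (Fin d),
      |(g z + h (c z)) - (g z + h (c y + fderiv ℝ c y (z - y)))| ≤
        (L * β / 2) * ‖z - y‖ ^ 2 := by
  intro z y
  have hlin := norm_sub_sub_fderiv_le_of_lipschitz_fderiv (hc.differentiable one_ne_zero) hcβ z y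
  calc |(g z + h (c z)) - (g z + h (c y + fderiv ℝ c y (z - y)))|
      = |h (c z) - h (c y + fderiv ℝ c y (z - y))| := by rw [add_sub_add_left_eq_sub]
    _ ≤ L * ‖c z - (c y + fderiv ℝ c y (z - y))‖ := hhL _ _
    _ ≤ L * (β / 2 * ‖z - y‖ ^ 2) := by rw [← sub_sub]; gcongr
    _ = (L * β / 2) * ‖z - y‖ ^ 2 := by ring

/-- For the composite function `F(x) = g x + h (c x)` with `h` convex and `L`-Lipschitz,
`g` closed convex, and `c` C¹-smooth with `β`-Lipschitz Jacobian, the linearized model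
`F(z; y) = g z + h (c y + ∇c(y)(z - y))` satisfies `|F z - F(z; y)| ≤ (Lβ/2) ‖z - y‖²`. -/
theorem composite_model_error {d m : ℕ}
    (g : EuclideanSpace ℝ (Fin d) → ℝ)
    (h : EuclideanSpace ℝ (Fin m) → ℝ)
    (c : EuclideanSpace ℝ (Fin d) → EuclideanSpace ℝ (Fin m))
    (L β : ℝ) (hL : 0 ≤ L) (hβ : 0 ≤ β)
    (hg : ConvexOn ℝ Set.univ g) (hgc : LowerSemicontinuous g)
    (hh : ConvexOn ℝ Set.univ h)
    (hhL : ∀ u v, |h u - h v| ≤ L * ‖u - v‖)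
    (hc : ContDiff ℝ 1 c)
    (hcβ : ∀ x y, ‖fderiv ℝ c x - fderiv ℝ c y‖ ≤ β * ‖x - y‖) :
    ∀ z y : EuclideanSpace ℝ (Fin d),
      |(g z + h (c z)) - (g z + h (c y + fderiv ℝ c y (z - y)))| ≤
        (L * β / 2) * ‖z - y‖ ^ 2 :=
  composite_model_error_general g h c L β hL hhL hc hcβ
end

section
/- Let h : R^m → R be convex and L-Lipschitz and c : R^d → R^m be C¹-smooth with β-Lipschitz Jacobian. Then the composition h∘c is μ-weakly convex with μ = Lβ, i.e., the function x ↦ h(c(x)) + (μ/2)‖x‖² is convex. -/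
/-!
A `β`-Lipschitz derivative makes `c` deviate from its first-order Taylor expansion by at most
`β/2 ‖y - x‖²`. Expanding around `z = a • x + b • y` at both endpoints, the linear terms cancel,
so `c` maps convex combinations to within `β/2 · ab ‖x - y‖²` of the corresponding combinations of
its values. Since `h` is `L`-Lipschitz and convex, `h ∘ c` then satisfies the convexity inequality
up to the error `Lβ/2 · ab ‖x - y‖²`, i.e. it is `-(Lβ)`-strongly convex, which in a Euclidean
space means exactly that adding `Lβ/2 ‖x‖²` makes it convex.
-/

open Set

variable {E F : Type*} [NormedAddCommGroup E] [NormedSpace ℝ E]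
  [NormedAddCommGroup F] [NormedSpace ℝ F]

theorem norm_sub_sub_fderiv_le_of_lipschitz_fderiv_s4 {f : E → F} {f' : E → E →L[ℝ] F} {β : ℝ}
    (hf : ∀ x, HasFDerivAt f (f' x) x) (hf' : ∀ x y, ‖f' x - f' y‖ ≤ β * ‖x - y‖) (x y : E) :
    ‖f y - f x - f' x (y - x)‖ ≤ β / 2 * ‖y - x‖ ^ 2 := by
  set v := y - x
  set g : ℝ → F := fun t => f (x + t • v) - f x - t • f' x v
  have hg : ∀ t, HasDerivAt g (f' (x + t • v) v - f' x v) t := by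
    intro t
    have hline : HasDerivAt (fun t : ℝ => x + t • v) v t := by
      simpa using ((hasDerivAt_id t).smul_const v).const_add x
    simpa using (((hf _).comp_hasDerivAt t hline).sub_const (f x)).fun_sub
      ((hasDerivAt_id t).smul_const (f' x v))
  have hB : ∀ t, HasDerivAt (fun t => β / 2 * t ^ 2 * ‖v‖ ^ 2) (β * t * ‖v‖ ^ 2) t := by
    intro t
    exact (((hasDerivAt_pow 2 t).const_mul (β / 2)).mul_const (‖v‖ ^ 2)).congr_deriv
      (by push_cast; ring)
  have hbound : ∀ t ∈ Ico (0 : ℝ) 1, ‖f' (x + t • v) v - f' x v‖ ≤ β * t * ‖v‖ ^ 2 := by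
    intro t ht
    calc ‖f' (x + t • v) v - f' x v‖ = ‖(f' (x + t • v) - f' x) v‖ := rfl
      _ ≤ ‖f' (x + t • v) - f' x‖ * ‖v‖ := ContinuousLinearMap.le_opNorm _ _
      _ ≤ β * ‖t • v‖ * ‖v‖ := by
        gcongr
        simpa using hf' (x + t • v) x
      _ = β * t * ‖v‖ ^ 2 := by
        rw [norm_smul, Real.norm_of_nonneg ht.1]
        ring
  have key := image_norm_le_of_norm_deriv_right_le_deriv_boundary
    (fun t _ => (hg t).continuousAt.continuousWithinAt) (fun t _ => (hg t).hasDerivWithinAt)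
    (by simp [g]) hB hbound (right_mem_Icc.2 zero_le_one)
  simpa [g, v] using key

theorem norm_map_convexCombo_sub_le_of_lipschitz_fderiv {c : E → F} {c' : E → E →L[ℝ] F}
    {β : ℝ} (hc : ∀ x, HasFDerivAt c (c' x) x) (hc' : ∀ x y, ‖c' x - c' y‖ ≤ β * ‖x - y‖)
    (x y : E) {a b : ℝ} (ha : 0 ≤ a) (hb : 0 ≤ b) (hab : a + b = 1) :
    ‖a • c x + b • c y - c (a • x + b • y)‖ ≤ β / 2 * (a * b) * ‖x - y‖ ^ 2 := by
  have hb' : b = 1 - a := by linarith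
  set z := a • x + b • y
  have hxz : x - z = b • (x - y) := by
    simp only [z, hb']
    module
  have hyz : y - z = -a • (x - y) := by
    simp only [z, hb']
    module
  -- The first-order terms cancel because `a • (x - z) + b • (y - z) = 0`.
  have hsplit : a • c x + b • c y - c z =
      a • (c x - c z - c' z (x - z)) + b • (c y - c z - c' z (y - z)) := by
    rw [hxz, hyz, map_smul, map_smul, hb']
    module
  have hTx := norm_sub_sub_fderiv_le_of_lipschitz_fderiv_s4 hc hc' z x
  have hTy := norm_sub_sub_fderiv_le_of_lipschitz_fderiv_s4 hc hc' z y
  rw [hxz, norm_smul, Real.norm_of_nonneg hb] at hTx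
  rw [hyz, norm_smul, norm_neg, Real.norm_of_nonneg ha] at hTy
  calc ‖a • c x + b • c y - c z‖
      ≤ a * ‖c x - c z - c' z (x - z)‖ + b * ‖c y - c z - c' z (y - z)‖ := by
        rw [hsplit]
        refine (norm_add_le _ _).trans ?_
        rw [norm_smul, norm_smul, Real.norm_of_nonneg ha, Real.norm_of_nonneg hb]
    _ ≤ a * (β / 2 * (b * ‖x - y‖) ^ 2) + b * (β / 2 * (a * ‖x - y‖) ^ 2) := by
        rw [hxz, hyz]
        gcongr
    _ = β / 2 * (a * b) * ‖x - y‖ ^ 2 := by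
        linear_combination β / 2 * (a * b) * ‖x - y‖ ^ 2 * hab

theorem ConvexOn.strongConvexOn_comp_of_lipschitz_fderiv {h : F → ℝ} {c : E → F}
    {c' : E → E →L[ℝ] F} {L β : ℝ} (hh : ConvexOn ℝ univ h)
    (hhL : ∀ u v, |h u - h v| ≤ L * ‖u - v‖) (hL : 0 ≤ L)
    (hc : ∀ x, HasFDerivAt c (c' x) x) (hc' : ∀ x y, ‖c' x - c' y‖ ≤ β * ‖x - y‖) :
    StrongConvexOn univ (-(L * β)) (h ∘ c) := by
  refine ⟨convex_univ, fun x _ y _ a b ha hb hab => ?_⟩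
  have hchord := norm_map_convexCombo_sub_le_of_lipschitz_fderiv hc hc' x y ha hb hab
  set w := a • c x + b • c y
  calc h (c (a • x + b • y))
      ≤ h w + L * ‖w - c (a • x + b • y)‖ := by
        linarith [(abs_sub_le_iff.1 (hhL w (c (a • x + b • y)))).2]
    _ ≤ a • h (c x) + b • h (c y) + L * (β / 2 * (a * b) * ‖x - y‖ ^ 2) := by
        gcongr
        exact hh.2 trivial trivial ha hb hab
    _ = a • (h ∘ c) x + b • (h ∘ c) y - a * b * (-(L * β) / 2 * ‖x - y‖ ^ 2) := by
        simp only [Function.comp_apply]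
        ring

theorem composition_weakly_convex_general {d m : ℕ}
    (h : EuclideanSpace ℝ (Fin m) → ℝ)
    (c : EuclideanSpace ℝ (Fin d) → EuclideanSpace ℝ (Fin m))
    (L β : ℝ) (hL : 0 ≤ L)
    (hh : ConvexOn ℝ Set.univ h)
    (hhL : ∀ u v, |h u - h v| ≤ L * ‖u - v‖)
    (hc : ContDiff ℝ 1 c)
    (hcβ : ∀ x y, ‖fderiv ℝ c x - fderiv ℝ c y‖ ≤ β * ‖x - y‖) :
    ConvexOn ℝ Set.univ (fun x => h (c x) + (L * β / 2) * ‖x‖ ^ 2) := by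
  have hc' : ∀ x, HasFDerivAt c (fderiv ℝ c x) x :=
    fun x => (hc.differentiable one_ne_zero x).hasFDerivAt
  have := strongConvexOn_iff_convex.1 (hh.strongConvexOn_comp_of_lipschitz_fderiv hhL hL hc' hcβ)
  simpa [neg_div] using this

/-- If `h` is convex and `L`-Lipschitz and `c` is C¹-smooth with `β`-Lipschitz Jacobian, then
the composition `h ∘ c` is `μ`-weakly convex with `μ = Lβ`, i.e. `x ↦ h (c x) + (μ/2)‖x‖²`
is convex. -/
theorem composition_weakly_convex {d m : ℕ}
    (h : EuclideanSpace ℝ (Fin m) → ℝ)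
    (c : EuclideanSpace ℝ (Fin d) → EuclideanSpace ℝ (Fin m))
    (L β : ℝ) (hL : 0 ≤ L) (hβ : 0 ≤ β)
    (hh : ConvexOn ℝ Set.univ h)
    (hhL : ∀ u v, |h u - h v| ≤ L * ‖u - v‖)
    (hc : ContDiff ℝ 1 c)
    (hcβ : ∀ x y, ‖fderiv ℝ c x - fderiv ℝ c y‖ ≤ β * ‖x - y‖) :
    ConvexOn ℝ Set.univ (fun x => h (c x) + (L * β / 2) * ‖x‖ ^ 2) :=
  composition_weakly_convex_general h c L β hL hh hhL hc hcβ
end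

section
/- Let f : R^d → R∪{∞} be a closed α-strongly convex function, x a point with f(x) − inf f ≤ ε, and λ > 0. Then the point y = prox_{λf}(x) satisfies (1/λ)‖x − y‖ ≤ √( ε / (λ(1 + λα/2)) ). -/
/-- Quadratic penalization principle, strongly convex case: if `f : ℝ^d → ℝ ∪ {∞}` is closed and
`α`-strongly convex, `f x - inf f ≤ ε`, and `y = prox_{λ f}(x)`, then
`λ⁻¹ ‖x - y‖ ≤ √(ε / (λ (1 + λα/2)))`. -/
theorem quadratic_penalization_strongly_convex {d : ℕ}
    (f : EuclideanSpace ℝ (Fin d) → EReal)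
    (hclosed : LowerSemicontinuous f)
    (hproper : ∀ z, f z ≠ ⊥)
    (α : ℝ) (hα : 0 ≤ α)
    (hsc : ∀ u v : EuclideanSpace ℝ (Fin d), ∀ a b : ℝ, 0 ≤ a → 0 ≤ b → a + b = 1 →
      f (a • u + b • v) + ((α / 2 * (a * b) * ‖u - v‖ ^ 2 : ℝ) : EReal) ≤
        (a : EReal) * f u + (b : EReal) * f v)
    (x y : EuclideanSpace ℝ (Fin d)) (ε lam : ℝ) (hε : 0 < ε) (hlam : 0 < lam)
    (hfin : ∃ r : ℝ, (⨅ z, f z) = (r : EReal))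
    (hx : f x ≤ (⨅ z, f z) + (ε : EReal))
    (hy : ∀ z, f y + ((‖y - x‖ ^ 2 / (2 * lam) : ℝ) : EReal) ≤
        f z + ((‖z - x‖ ^ 2 / (2 * lam) : ℝ) : EReal)) :
    lam⁻¹ * ‖x - y‖ ≤ Real.sqrt (ε / (lam * (1 + lam * α / 2))) := by
  obtain ⟨m, hm⟩ := hfin
  rw [hm] at hx
  have hmy : (m : EReal) ≤ f y := hm ▸ iInf_le _ y
  -- f x is finite
  have hxtop : f x ≠ ⊤ := by
    intro h
    rw [h, ← EReal.coe_add] at hx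
    exact absurd hx (not_le.mpr (EReal.coe_lt_top _))
  obtain ⟨fx, hfx⟩ : ∃ r : ℝ, f x = (r : EReal) :=
    ⟨(f x).toReal, (EReal.coe_toReal hxtop (hproper x)).symm⟩
  have hx' : fx ≤ m + ε := by rw [hfx, ← EReal.coe_add] at hx; exact_mod_cast hx
  -- f y is finite
  have hytop : f y ≠ ⊤ := by
    intro h
    have hyx := hy x
    rw [h, hfx, ← EReal.coe_add, EReal.top_add_coe] at hyx
    exact absurd hyx (not_le.mpr (EReal.coe_lt_top _))
  obtain ⟨fy, hfy⟩ : ∃ r : ℝ, f y = (r : EReal) :=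
    ⟨(f y).toReal, (EReal.coe_toReal hytop (hproper y)).symm⟩
  have hmy' : m ≤ fy := by rw [hfy] at hmy; exact_mod_cast hmy
  have hfxy : fx ≤ fy + ε := by linarith
  set D := ‖y - x‖ ^ 2 with hD_def
  have hDnn : 0 ≤ D := by positivity
  -- key inequality for each b ∈ (0,1)
  have key : ∀ b : ℝ, b ∈ Set.Ioo (0:ℝ) 1 → D * ((1 + b) + lam * α * b) ≤ 2 * lam * ε := by
    intro b hb
    obtain ⟨hb0, hb1⟩ := hb
    have ha0 : (0:ℝ) < 1 - b := by linarith
    set z := (1 - b) • x + b • y with hz_def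
    have hz_sub : z - x = b • (y - x) := by rw [hz_def]; module
    have hnorm : ‖z - x‖ ^ 2 = b ^ 2 * D := by
      rw [hz_sub, norm_smul, Real.norm_eq_abs, mul_pow, sq_abs, hD_def]
    have hsczE := hsc x y (1 - b) b ha0.le hb0.le (by ring)
    rw [← hz_def, hfx, hfy] at hsczE
    -- f z is finite
    have hztop : f z ≠ ⊤ := by
      intro h
      rw [h, EReal.top_add_coe, ← EReal.coe_mul, ← EReal.coe_mul, ← EReal.coe_add] at hsczE
      exact absurd hsczE (not_le.mpr (EReal.coe_lt_top _))
    obtain ⟨fz, hfz⟩ : ∃ r : ℝ, f z = (r : EReal) :=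
      ⟨(f z).toReal, (EReal.coe_toReal hztop (hproper z)).symm⟩
    rw [hfz] at hsczE
    have hsc' : fz + α / 2 * ((1 - b) * b) * ‖y - x‖ ^ 2 ≤ (1 - b) * fx + b * fy := by
      rw [norm_sub_rev y x]; exact_mod_cast hsczE
    have hyzE := hy z
    rw [hfy, hfz, hnorm] at hyzE
    have hy' : fy + D / (2 * lam) ≤ fz + b ^ 2 * D / (2 * lam) := by exact_mod_cast hyzE
    have h2lam : (2 * lam) ≠ 0 := by positivity
    have hy2 : fy * (2 * lam) + D ≤ fz * (2 * lam) + b ^ 2 * D := by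
      have := mul_le_mul_of_nonneg_right hy' (by positivity : (0:ℝ) ≤ 2 * lam)
      field_simp at this
      linarith [this]
    have hsc2 : fz * (2 * lam) + lam * α * ((1 - b) * b) * D ≤
        ((1 - b) * fx + b * fy) * (2 * lam) := by
      rw [← hD_def] at hsc'
      nlinarith [mul_le_mul_of_nonneg_right hsc' (by positivity : (0:ℝ) ≤ 2 * lam)]
    have h3 : 2 * lam * (1 - b) * fx ≤ 2 * lam * (1 - b) * (fy + ε) :=
      mul_le_mul_of_nonneg_left hfxy (by positivity)
    have hstep : (1 - b) * (D * ((1 + b) + lam * α * b)) ≤ (1 - b) * (2 * lam * ε) := by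
      nlinarith [hy2, hsc2, h3]
    exact le_of_mul_le_mul_left hstep ha0
  -- pass to the limit b → 1⁻
  have hD : D * (2 + lam * α) ≤ 2 * lam * ε := by
    have htend : Filter.Tendsto (fun b : ℝ => D * ((1 + b) + lam * α * b))
        (nhdsWithin 1 (Set.Iio 1)) (nhds (D * (2 + lam * α))) := by
      have hc : Continuous (fun b : ℝ => D * ((1 + b) + lam * α * b)) := by continuity
      have := hc.tendsto 1
      simp only [show D * ((1 + (1:ℝ)) + lam * α * 1) = D * (2 + lam * α) by ring] at this
      exact this.mono_left nhdsWithin_le_nhds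
    refine le_of_tendsto htend ?_
    have h1 : ∀ᶠ b in nhdsWithin (1:ℝ) (Set.Iio 1), 0 < b :=
      (eventually_gt_nhds (by norm_num : (0:ℝ) < 1)).filter_mono nhdsWithin_le_nhds
    have h2 : ∀ᶠ b in nhdsWithin (1:ℝ) (Set.Iio 1), b < 1 :=
      eventually_mem_nhdsWithin.mono fun b hb => hb
    filter_upwards [h1, h2] with b hb1 hb2
    exact key b ⟨hb1, hb2⟩
  -- conclude
  rw [norm_sub_rev]
  have hpos : 0 < lam * (1 + lam * α / 2) := by positivity
  have h1 : (0:ℝ) ≤ lam⁻¹ * ‖y - x‖ := by positivity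
  rw [show lam⁻¹ * ‖y - x‖ = ‖y - x‖ / lam by rw [inv_mul_eq_div, div_eq_inv_mul]]
  rw [Real.le_sqrt (by positivity)]
  rw [div_pow, div_le_div_iff₀ (by positivity) hpos]
  nlinarith [mul_le_mul_of_nonneg_right hD hlam.le, hD, hlam, hDnn]
  positivity
end

section
/- In the composite setting with t ≤ 1/μ, the exact prox-linear iterates x_{k+1} = S_t(x_k) satisfy min_{j=0,…,N−1} ‖G_t(x_j)‖² ≤ 2t⁻¹(F(x_0) − F*)/N, where F* = lim F(x_N). -/
/-!
For `t ≤ 1/(Lβ)` the prox-linear model `F_t(·; x)` lies above `F`: Taylor's bound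
`‖c y - c x - ∇c(x)(y - x)‖ ≤ β/2 ‖y - x‖²` composed with the `L`-Lipschitz `h` costs at most
`‖y - x‖²/(2t)`. On the other hand, strong convexity of the model makes its minimizer `S_t(x)`
beat `x` by `‖S_t(x) - x‖²/t`. Together, every step decreases `F` by at least
`‖x_{k+1} - x_k‖²/(2t) = (t/2)‖G_t(x_k)‖²`; summing these decreases against `F(x_0) - F*` and
bounding the minimum by the mean gives the rate.
-/

open Set Filter Topology Finset

section

variable {E F : Type*} [NormedAddCommGroup E] [NormedSpace ℝ E]
  [NormedAddCommGroup F] [NormedSpace ℝ F]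

theorem norm_image_sub_sub_fderiv_le {c : E → F} {β : ℝ} (hc : Differentiable ℝ c)
    (hcβ : ∀ x y, ‖fderiv ℝ c x - fderiv ℝ c y‖ ≤ β * ‖x - y‖) (x y : E) :
    ‖c y - c x - fderiv ℝ c x (y - x)‖ ≤ β / 2 * ‖y - x‖ ^ 2 := by
  set Δ := y - x
  set A := fderiv ℝ c x
  have hf : ∀ s : ℝ, HasDerivAt (fun s : ℝ => c (x + s • Δ) - c x - s • A Δ)
      (fderiv ℝ c (x + s • Δ) Δ - A Δ) s := by
    intro s
    have hline : HasDerivAt (fun s : ℝ => x + s • Δ) Δ s := by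
      simpa using ((hasDerivAt_id s).smul_const Δ).const_add x
    have hlin : HasDerivAt (fun s : ℝ => s • A Δ) (A Δ) s := by
      simpa using (hasDerivAt_id s).smul_const (A Δ)
    exact (((hc _).hasFDerivAt.comp_hasDerivAt s hline).sub_const (c x)).sub hlin
  have hB : ∀ s : ℝ, HasDerivAt (fun s : ℝ => β * ‖Δ‖ ^ 2 / 2 * s ^ 2) (β * ‖Δ‖ ^ 2 * s) s :=
    fun s => ((hasDerivAt_pow 2 s).const_mul _).congr_deriv (by push_cast; ring)
  have hbound : ∀ s ∈ Ico (0 : ℝ) 1, ‖fderiv ℝ c (x + s • Δ) Δ - A Δ‖ ≤ β * ‖Δ‖ ^ 2 * s := by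
    intro s hs
    calc ‖fderiv ℝ c (x + s • Δ) Δ - A Δ‖ ≤ ‖fderiv ℝ c (x + s • Δ) - A‖ * ‖Δ‖ :=
          (fderiv ℝ c (x + s • Δ) - A).le_opNorm Δ
      _ ≤ β * ‖s • Δ‖ * ‖Δ‖ := by
          gcongr
          simpa using hcβ (x + s • Δ) x
      _ = β * ‖Δ‖ ^ 2 * s := by
          rw [norm_smul, Real.norm_eq_abs, abs_of_nonneg hs.1]
          ring
  have key := image_norm_le_of_norm_deriv_right_le_deriv_boundary
    (fun s _ => (hf s).continuousAt.continuousWithinAt) (fun s _ => (hf s).hasDerivWithinAt)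
    (by simp) hB hbound (right_mem_Icc.2 zero_le_one)
  convert key using 1
  · simp [Δ]
  · ring

theorem comp_le_comp_linearization_add {h : F → ℝ} {c : E → F} {L β : ℝ} (hL : 0 ≤ L)
    (hhL : ∀ u v, |h u - h v| ≤ L * ‖u - v‖) (hc : Differentiable ℝ c)
    (hcβ : ∀ x y, ‖fderiv ℝ c x - fderiv ℝ c y‖ ≤ β * ‖x - y‖) (x y : E) :
    h (c y) ≤ h (c x + fderiv ℝ c x (y - x)) + L * β / 2 * ‖y - x‖ ^ 2 := by
  have hlip := (le_abs_self _).trans (hhL (c y) (c x + fderiv ℝ c x (y - x)))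
  have htaylor := mul_le_mul_of_nonneg_left (norm_image_sub_sub_fderiv_le hc hcβ x y) hL
  rw [sub_add_eq_sub_sub] at hlip
  linarith

theorem ConvexOn.comp_add_apply_sub {h : F → ℝ} (hh : ConvexOn ℝ univ h) (y : F) (A : E →L[ℝ] F)
    (x : E) : ConvexOn ℝ univ (fun z => h (y + A (z - x))) := by
  convert (hh.translate_right (y - A x)).comp_linearMap A.toLinearMap using 1
  · simp
  · funext z
    simp only [Function.comp_apply, ContinuousLinearMap.coe_coe, map_sub]
    congr 1
    abel

theorem ConvexOn.add_norm_sub_sq_div_le_of_forall_le {φ : E → ℝ} (hφ : ConvexOn ℝ univ φ)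
    {x p : E} {t : ℝ} (hp : ∀ z, φ p + ‖p - x‖ ^ 2 / (2 * t) ≤ φ z + ‖z - x‖ ^ 2 / (2 * t)) :
    φ p + ‖p - x‖ ^ 2 / t ≤ φ x := by
  set b := ‖p - x‖ ^ 2 / (2 * t)
  have hsegment : ∀ l ∈ Ioo (0 : ℝ) 1, φ p - φ x ≤ (l - 2) * b := by
    rintro l ⟨hl0, hl1⟩
    have hconv : φ ((1 - l) • p + l • x) ≤ (1 - l) * φ p + l * φ x :=
      hφ.2 trivial trivial (by linarith) hl0.le (by ring)
    have hdist : ‖(1 - l) • p + l • x - x‖ ^ 2 / (2 * t) = (1 - l) ^ 2 * b := by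
      rw [show (1 - l) • p + l • x - x = (1 - l) • (p - x) by module, norm_smul, mul_pow,
        Real.norm_eq_abs, sq_abs]
      ring
    have hmin := hp ((1 - l) • p + l • x)
    rw [hdist] at hmin
    have hscaled : l * (φ p - φ x) ≤ l * ((l - 2) * b) := by linear_combination hmin + hconv
    exact le_of_mul_le_mul_left hscaled hl0
  have hlim : Tendsto (fun l : ℝ => (l - 2) * b) (𝓝[>] 0) (𝓝 ((0 - 2) * b)) :=
    tendsto_nhdsWithin_of_tendsto_nhds ((continuous_id.sub continuous_const).mul
      continuous_const).continuousAt
  have hgap := ge_of_tendsto hlim (eventually_of_mem (Ioo_mem_nhdsGT one_pos) hsegment)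
  have hb : ‖p - x‖ ^ 2 / t = 2 * b := by ring
  linarith

theorem prox_linear_sufficient_decrease {g : E → ℝ} {h : F → ℝ} {c : E → F} {L β t : ℝ}
    (hg : ConvexOn ℝ univ g) (hh : ConvexOn ℝ univ h) (hL : 0 ≤ L)
    (hhL : ∀ u v, |h u - h v| ≤ L * ‖u - v‖) (hc : Differentiable ℝ c)
    (hcβ : ∀ x y, ‖fderiv ℝ c x - fderiv ℝ c y‖ ≤ β * ‖x - y‖) (hLβ : L * β ≤ t⁻¹) {x p : E}
    (hp : ∀ z, g p + h (c x + fderiv ℝ c x (p - x)) + ‖p - x‖ ^ 2 / (2 * t) ≤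
      g z + h (c x + fderiv ℝ c x (z - x)) + ‖z - x‖ ^ 2 / (2 * t)) :
    g p + h (c p) + ‖p - x‖ ^ 2 / (2 * t) ≤ g x + h (c x) := by
  have hmodel := (hg.add (hh.comp_add_apply_sub (c x) (fderiv ℝ c x) x))
    |>.add_norm_sub_sq_div_le_of_forall_le hp
  simp only [Pi.add_apply, sub_self, map_zero, add_zero] at hmodel
  have hupper := comp_le_comp_linearization_add hL hhL hc hcβ x p
  have hcurv : L * β / 2 * ‖p - x‖ ^ 2 ≤ ‖p - x‖ ^ 2 / (2 * t) := by
    calc L * β / 2 * ‖p - x‖ ^ 2 ≤ t⁻¹ / 2 * ‖p - x‖ ^ 2 := by gcongr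
      _ = ‖p - x‖ ^ 2 / (2 * t) := by ring
  have hprox : ‖p - x‖ ^ 2 / t = 2 * (‖p - x‖ ^ 2 / (2 * t)) := by ring
  linarith

end

theorem exists_lt_mul_le_sub_of_add_le {F r : ℕ → ℝ} {Fstar : ℝ}
    (hdesc : ∀ k, F (k + 1) + r k ≤ F k) (hr : ∀ k, 0 ≤ r k)
    (hlim : Tendsto F atTop (𝓝 Fstar)) {N : ℕ} (hN : 0 < N) :
    ∃ j < N, N * r j ≤ F 0 - Fstar := by
  have hanti : Antitone F := antitone_nat_of_succ_le fun k => by linarith [hdesc k, hr k]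
  have hsum : ∑ k ∈ range N, r k ≤ F 0 - F N := by
    rw [← sum_range_sub']
    exact sum_le_sum fun k _ => by linarith [hdesc k]
  obtain ⟨j, hj, hmin⟩ := exists_min_image (range N) r (nonempty_range_iff.2 hN.ne')
  refine ⟨j, mem_range.1 hj, ?_⟩
  calc (N : ℝ) * r j = #(range N) • r j := by simp
    _ ≤ ∑ k ∈ range N, r k := card_nsmul_le_sum _ _ _ hmin
    _ ≤ F 0 - Fstar := by linarith [hanti.le_of_tendsto hlim N]

theorem prox_linear_efficiency_general {d m : ℕ}
    (g : EuclideanSpace ℝ (Fin d) → ℝ)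
    (h : EuclideanSpace ℝ (Fin m) → ℝ)
    (c : EuclideanSpace ℝ (Fin d) → EuclideanSpace ℝ (Fin m))
    (L β t : ℝ) (hL : 0 ≤ L) (ht : 0 < t) (htμ : t ≤ (L * β)⁻¹)
    (hg : ConvexOn ℝ Set.univ g)
    (hh : ConvexOn ℝ Set.univ h)
    (hhL : ∀ u v, |h u - h v| ≤ L * ‖u - v‖)
    (hc : ContDiff ℝ 1 c)
    (hcβ : ∀ x y, ‖fderiv ℝ c x - fderiv ℝ c y‖ ≤ β * ‖x - y‖)
    (x : ℕ → EuclideanSpace ℝ (Fin d))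
    (hstep : ∀ k z,
      g (x (k + 1)) + h (c (x k) + fderiv ℝ c (x k) (x (k + 1) - x k)) +
          ‖x (k + 1) - x k‖ ^ 2 / (2 * t) ≤
        g z + h (c (x k) + fderiv ℝ c (x k) (z - x k)) + ‖z - x k‖ ^ 2 / (2 * t))
    (Fstar : ℝ)
    (hlim : Filter.Tendsto (fun N => g (x N) + h (c (x N))) Filter.atTop (nhds Fstar)) :
    ∀ N : ℕ, 0 < N → ∃ j < N,
      ‖t⁻¹ • (x j - x (j + 1))‖ ^ 2 ≤ 2 * t⁻¹ * (g (x 0) + h (c (x 0)) - Fstar) / N := by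
  intro N hN
  have hLβ : L * β ≤ t⁻¹ := by
    rcases le_or_gt (L * β) 0 with hμ | hμ
    · exact hμ.trans (inv_pos.2 ht).le
    · exact (le_inv_comm₀ ht hμ).1 htμ
  have hdesc k := prox_linear_sufficient_decrease hg hh hL hhL (hc.differentiable one_ne_zero)
    hcβ hLβ (hstep k)
  obtain ⟨j, hj, hbound⟩ := exists_lt_mul_le_sub_of_add_le (F := fun k => g (x k) + h (c (x k)))
    hdesc (fun k => by positivity) hlim hN
  refine ⟨j, hj, ?_⟩
  have hG : ‖t⁻¹ • (x j - x (j + 1))‖ ^ 2 = 2 * t⁻¹ * (‖x (j + 1) - x j‖ ^ 2 / (2 * t)) := by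
    rw [norm_smul, norm_sub_rev, mul_pow, Real.norm_eq_abs, abs_of_pos (inv_pos.2 ht)]
    field_simp
  rw [hG, le_div_iff₀ (by exact_mod_cast hN)]
  calc 2 * t⁻¹ * (‖x (j + 1) - x j‖ ^ 2 / (2 * t)) * N
      = 2 * t⁻¹ * (N * (‖x (j + 1) - x j‖ ^ 2 / (2 * t))) := by ring
    _ ≤ 2 * t⁻¹ * (g (x 0) + h (c (x 0)) - Fstar) := by gcongr

/-- Efficiency of the exact prox-linear method: with `t ≤ 1/μ` (`μ = Lβ`), the iterates
`x_{k+1} = S_t(x_k)` satisfy `min_{j<N} ‖G_t(x_j)‖² ≤ 2 t⁻¹ (F(x_0) - F*) / N` where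
`F* = lim_N F(x_N)` and `G_t(x_j) = t⁻¹ (x_j - x_{j+1})`. -/
theorem prox_linear_efficiency {d m : ℕ}
    (g : EuclideanSpace ℝ (Fin d) → ℝ)
    (h : EuclideanSpace ℝ (Fin m) → ℝ)
    (c : EuclideanSpace ℝ (Fin d) → EuclideanSpace ℝ (Fin m))
    (L β t : ℝ) (hL : 0 ≤ L) (hβ : 0 ≤ β) (ht : 0 < t) (htμ : t ≤ (L * β)⁻¹)
    (hg : ConvexOn ℝ Set.univ g) (hgc : LowerSemicontinuous g)
    (hh : ConvexOn ℝ Set.univ h)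
    (hhL : ∀ u v, |h u - h v| ≤ L * ‖u - v‖)
    (hc : ContDiff ℝ 1 c)
    (hcβ : ∀ x y, ‖fderiv ℝ c x - fderiv ℝ c y‖ ≤ β * ‖x - y‖)
    (x : ℕ → EuclideanSpace ℝ (Fin d))
    (hstep : ∀ k z,
      g (x (k + 1)) + h (c (x k) + fderiv ℝ c (x k) (x (k + 1) - x k)) +
          ‖x (k + 1) - x k‖ ^ 2 / (2 * t) ≤
        g z + h (c (x k) + fderiv ℝ c (x k) (z - x k)) + ‖z - x k‖ ^ 2 / (2 * t))
    (Fstar : ℝ)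
    (hlim : Filter.Tendsto (fun N => g (x N) + h (c (x N))) Filter.atTop (nhds Fstar)) :
    ∀ N : ℕ, 0 < N → ∃ j < N,
      ‖t⁻¹ • (x j - x (j + 1))‖ ^ 2 ≤ 2 * t⁻¹ * (g (x 0) + h (c (x 0)) - Fstar) / N :=
  prox_linear_efficiency_general g h c L β t hL ht htμ hg hh hhL hc hcβ x hstep Fstar hlim
end

section
/- Let h be convex, G be closed strongly convex, A linear, and b a vector. Define φ(w) = G*(A*w) − ⟨b,w⟩ + h*(w). Fix w ∈ dom φ and ζ ∈ ∂φ(w). Then the point x̄ = ∇G*(A*w) is the minimizer of z ↦ h(ζ + b − Az) + G(z). -/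
/-!
Write `g u = G*(A* u) - ⟪b, u⟫`; it is differentiable at `w` with gradient `A x̄ - b`. Comparing
difference quotients along segments issuing from `w` with the convexity of `h*`, a subgradient `ζ`
of `g + h*` at `w` yields the subgradient `η = ζ + b - A x̄` of `h*` at `w`; in the same way `x̄` is
a subgradient of `G*` at `A* w`. For a closed convex `f`, a subgradient `η` of `f*` at `w` forces
the Fenchel equality `f η + f* w = ⟪η, w⟫`: otherwise Hahn–Banach separates `(η, ⟪η, w⟫ - f* w)`
from the epigraph of `f` by an affine minorant contradicting the subgradient inequality. Adding the
equalities for `h` at `η` and for `G` at `x̄`, the value `h η + G x̄` is the lower bound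
`⟪w, ζ + b⟫ - h* w - G* (A* w)` that Fenchel–Young gives for every `h (ζ + b - A z) + G z`.
-/

open scoped RealInnerProductSpace
open Set Filter Topology

variable {E : Type*} [NormedAddCommGroup E] [InnerProductSpace ℝ E]

noncomputable def fenchelConjugate (f : E → ℝ) (u : E) : EReal :=
  ⨆ z, ((⟪u, z⟫ - f z : ℝ) : EReal)

def HasSubgradientAt (φ : E → EReal) (ζ w : E) : Prop :=
  ∀ u, φ w + ((⟪ζ, u - w⟫ : ℝ) : EReal) ≤ φ u

section FenchelConjugate

variable {f : E → ℝ}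

theorem inner_sub_le_fenchelConjugate (f : E → ℝ) (u z : E) :
    ((⟪u, z⟫ - f z : ℝ) : EReal) ≤ fenchelConjugate f u :=
  le_iSup (fun z => ((⟪u, z⟫ - f z : ℝ) : EReal)) z

theorem fenchelConjugate_le_coe_iff {u : E} {c : ℝ} :
    fenchelConjugate f u ≤ c ↔ ∀ z, ⟪u, z⟫ - f z ≤ c := by
  simp only [fenchelConjugate, iSup_le_iff, EReal.coe_le_coe_iff]

theorem fenchelConjugate_ne_bot (f : E → ℝ) (u : E) : fenchelConjugate f u ≠ ⊥ :=
  ne_bot_of_le_ne_bot (EReal.coe_ne_bot _) (inner_sub_le_fenchelConjugate f u 0)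

theorem fenchelConjugate_eq_coe_ciSup {u : E} (hf : BddAbove (range fun z => ⟪u, z⟫ - f z)) :
    fenchelConjugate f u = ((⨆ z, (⟪u, z⟫ - f z) : ℝ) : EReal) :=
  (Monotone.map_ciSup_of_continuousAt continuous_coe_real_ereal.continuousAt
    EReal.coe_strictMono.monotone hf).symm

theorem fenchelConjugate_add_smul_sub_le {u v : E} {s T σ : ℝ} (hσ₀ : 0 ≤ σ) (hσ₁ : σ ≤ 1)
    (hu : fenchelConjugate f u ≤ s) (hv : fenchelConjugate f v ≤ T) :
    fenchelConjugate f (u + σ • (v - u)) ≤ ((s + σ * (T - s) : ℝ) : EReal) := by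
  rw [fenchelConjugate_le_coe_iff] at hu hv ⊢
  intro z
  have hσz : ⟪u + σ • (v - u), z⟫ = ⟪u, z⟫ + σ * (⟪v, z⟫ - ⟪u, z⟫) := by
    rw [inner_add_left, real_inner_smul_left, inner_sub_left]
  rw [hσz]
  linarith [mul_le_mul_of_nonneg_left (hv z) hσ₀,
    mul_le_mul_of_nonneg_left (hu z) (sub_nonneg.2 hσ₁)]

end FenchelConjugate

section Hilbert

variable [CompleteSpace E]

theorem le_inner_of_hasGradientAt_of_le_sub {g : E → ℝ} {p w v : E} {c : ℝ}
    (hg : HasGradientAt g p w) (hslope : ∀ σ ∈ Ioo (0 : ℝ) 1, c * σ ≤ g (w + σ • v) - g w) :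
    c ≤ ⟪p, v⟫ := by
  have hline : HasDerivAt (fun σ : ℝ => w + σ • v) v 0 := by
    simpa only [one_smul] using ((hasDerivAt_id' (0 : ℝ)).smul_const v).const_add w
  have hg' : HasFDerivAt g (InnerProductSpace.toDual ℝ E p) ((fun σ : ℝ => w + σ • v) 0) := by
    simpa only [zero_smul, add_zero] using hg.hasFDerivAt
  have hderiv : HasDerivAt (fun σ : ℝ => g (w + σ • v)) ⟪p, v⟫ 0 := by
    exact hg'.comp_hasDerivAt 0 hline
  have hlim : Tendsto (slope (fun σ : ℝ => g (w + σ • v)) 0) (𝓝[>] 0) (𝓝 ⟪p, v⟫) :=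
    (hasDerivAt_iff_tendsto_slope.mp hderiv).mono_left
      (nhdsWithin_mono 0 fun _ hσ => ne_of_gt hσ)
  refine ge_of_tendsto hlim ?_
  filter_upwards [Ioo_mem_nhdsGT (zero_lt_one' ℝ)] with σ hσ
  rw [slope_def_field, sub_zero, zero_smul, add_zero, le_div_iff₀ hσ.1]
  exact hslope σ hσ

theorem hasSubgradientAt_fenchelConjugate_sub_gradient {f g : E → ℝ} {ζ p w : E}
    (hg : HasGradientAt g p w) (hw : fenchelConjugate f w ≠ ⊤)
    (hζ : HasSubgradientAt (fun u => (g u : EReal) + fenchelConjugate f u) ζ w) :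
    HasSubgradientAt (fenchelConjugate f) (ζ - p) w := by
  intro u
  obtain ⟨s, hs⟩ : ∃ s : ℝ, fenchelConjugate f w = s :=
    ⟨_, (EReal.coe_toReal hw (fenchelConjugate_ne_bot f w)).symm⟩
  by_cases hu : fenchelConjugate f u = ⊤
  · exact hu ▸ le_top
  obtain ⟨T, hT⟩ : ∃ T : ℝ, fenchelConjugate f u = T :=
    ⟨_, (EReal.coe_toReal hu (fenchelConjugate_ne_bot f u)).symm⟩
  have hslope : ⟪ζ, u - w⟫ + s - T ≤ ⟪p, u - w⟫ := by
    refine le_inner_of_hasGradientAt_of_le_sub hg fun σ hσ => ?_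
    have hconv := fenchelConjugate_add_smul_sub_le hσ.1.le hσ.2.le hs.le hT.le
    have := (hζ (w + σ • (u - w))).trans (add_le_add_right hconv _)
    simp only [hs, add_sub_cancel_left, real_inner_smul_right, ← EReal.coe_add,
      EReal.coe_le_coe_iff] at this
    linarith
  rw [hs, hT, ← EReal.coe_add, EReal.coe_le_coe_iff, inner_sub_left]
  linarith

theorem hasSubgradientAt_fenchelConjugate_of_hasGradientAt {f F : E → ℝ} {p y : E}
    (hF : ∀ u, fenchelConjugate f u = F u) (hFy : HasGradientAt F p y) :
    HasSubgradientAt (fenchelConjugate f) p y := by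
  have hneg : HasGradientAt (fun u => -F u) (-p) y := by
    rw [hasGradientAt_iff_hasFDerivAt, map_neg]
    exact hFy.hasFDerivAt.neg
  -- `-F + f*` vanishes identically
  have hzero : HasSubgradientAt (fun u => ((-F u : ℝ) : EReal) + fenchelConjugate f u) 0 y :=
    fun u => by simp only [hF, ← EReal.coe_add, neg_add_cancel, inner_zero_left, add_zero, le_refl]
  simpa using hasSubgradientAt_fenchelConjugate_sub_gradient hneg (hF y ▸ EReal.coe_ne_top _) hzero

theorem HasGradientAt.comp_adjoint_sub_inner {F : Type*} [NormedAddCommGroup F]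
    [InnerProductSpace ℝ F] [CompleteSpace F] {Φ : F → ℝ} {x : F} {A : F →L[ℝ] E} {w : E}
    (hΦ : HasGradientAt Φ x (ContinuousLinearMap.adjoint A w)) (b : E) :
    HasGradientAt (fun u => Φ (ContinuousLinearMap.adjoint A u) - ⟪b, u⟫) (A x - b) w := by
  rw [hasGradientAt_iff_hasFDerivAt] at hΦ ⊢
  have hcomp := hΦ.comp w (ContinuousLinearMap.adjoint A).hasFDerivAt
  refine (hcomp.sub (innerSL ℝ b).hasFDerivAt).congr_fderiv ?_
  ext v
  simp [ContinuousLinearMap.adjoint_inner_right]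

theorem ConvexOn.exists_affine_minorant_gt {f : E → ℝ}
    (hf : ConvexOn ℝ univ f) (hfc : LowerSemicontinuous f) {x₀ : E} {r₀ : ℝ} (hr₀ : r₀ < f x₀) :
    ∃ u K, (∀ z, ⟪u, z⟫ - f z ≤ K) ∧ r₀ < ⟪u, x₀⟫ - K := by
  have hconv : Convex ℝ {p : E × ℝ | f p.1 ≤ p.2} := by
    simpa only [mem_univ, true_and] using hf.convex_epigraph
  obtain ⟨ℓ, c, hℓx₀, hℓS⟩ := geometric_hahn_banach_point_closed hconv hfc.isClosed_epigraph
    (x := (x₀, r₀)) (not_le.2 hr₀)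
  set β := ℓ (0, 1)
  have hℓ : ∀ z r, ℓ (z, r) = ℓ (z, 0) + r * β := fun z r => by
    rw [← smul_eq_mul, ← map_smul, ← map_add, Prod.smul_mk, smul_zero, smul_eq_mul, mul_one,
      Prod.mk_add_mk, add_zero, zero_add]
  -- `(x₀, r)` lies in the epigraph for large `r`, so the separating functional increases upwards
  have hβ : 0 < β := by
    by_contra! hβ
    have := hℓS (x₀, max (f x₀) r₀) (show f x₀ ≤ _ from le_max_left _ _)
    rw [hℓ] at this hℓx₀
    nlinarith [le_max_right (f x₀) r₀]
  set p := (InnerProductSpace.toDual ℝ E).symm (ℓ.comp (ContinuousLinearMap.inl ℝ E ℝ))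
  have hp : ∀ z, ⟪p, z⟫ = ℓ (z, 0) := fun z => by simp [p]
  refine ⟨(-β⁻¹) • p, -(c / β), fun z => ?_, ?_⟩
  · have := hℓS (z, f z) (show f z ≤ f z from le_rfl)
    rw [hℓ, ← hp] at this
    rw [real_inner_smul_left]
    field_simp
    nlinarith
  · rw [hℓ, ← hp] at hℓx₀
    rw [real_inner_smul_left]
    field_simp
    nlinarith

theorem ConvexOn.add_fenchelConjugate_le_inner {f : E → ℝ} (hf : ConvexOn ℝ univ f)
    (hfc : LowerSemicontinuous f) {η w : E} {s : ℝ} (hs : fenchelConjugate f w = s)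
    (hη : HasSubgradientAt (fenchelConjugate f) η w) : f η + s ≤ ⟪η, w⟫ := by
  by_contra! hlt
  obtain ⟨u, K, hK, hgt⟩ := hf.exists_affine_minorant_gt hfc (r₀ := ⟪η, w⟫ - s) (by linarith)
  have := (hη u).trans (fenchelConjugate_le_coe_iff.2 hK)
  rw [hs, ← EReal.coe_add, EReal.coe_le_coe_iff, inner_sub_right] at this
  rw [real_inner_comm η u] at hgt
  linarith

theorem StrongConvexOn.bddAbove_range_inner_sub {f : E → ℝ} {m : ℝ} (hm : 0 < m)
    (hf : StrongConvexOn univ m f) (hfc : LowerSemicontinuous f) (y : E) :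
    BddAbove (range fun z => ⟪y, z⟫ - f z) := by
  have hq : LowerSemicontinuous fun z => f z - m / 2 * ‖z‖ ^ 2 :=
    hfc.add (by fun_prop : Continuous fun z : E => -(m / 2 * ‖z‖ ^ 2)).lowerSemicontinuous
  obtain ⟨u, K, hK, -⟩ := (strongConvexOn_iff_convex.1 hf).exists_affine_minorant_gt hq
    (x₀ := 0) (sub_one_lt _)
  refine ⟨‖y - u‖ ^ 2 / (2 * m) + K, forall_mem_range.2 fun z => ?_⟩
  have hyu := real_inner_le_norm (y - u) z
  have hsq : ‖y - u‖ * ‖z‖ - m / 2 * ‖z‖ ^ 2 ≤ ‖y - u‖ ^ 2 / (2 * m) := by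
    rw [le_div_iff₀ (by positivity)]
    nlinarith [sq_nonneg (‖y - u‖ - m * ‖z‖)]
  rw [inner_sub_left] at hyu
  linarith [hK z]

end Hilbert

/-- Primal recovery from dual stationarity: let `φ(w) = G*(A*w) - ⟪b, w⟫ + h*(w)` be the dual
objective, where `G` is closed and `t⁻¹`-strongly convex (so `G*` is differentiable) and `h` is
convex. If `w ∈ dom φ` and `ζ ∈ ∂φ(w)`, then `x̄ = ∇G*(A* w)` minimizes
`z ↦ h (ζ + b - A z) + G z`. -/
theorem primal_recovery_from_dual_stationarity {d m : ℕ}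
    (h : EuclideanSpace ℝ (Fin m) → ℝ)
    (G : EuclideanSpace ℝ (Fin d) → ℝ)
    (A : EuclideanSpace ℝ (Fin d) →L[ℝ] EuclideanSpace ℝ (Fin m))
    (b : EuclideanSpace ℝ (Fin m)) (t : ℝ) (ht : 0 < t)
    (hh : ConvexOn ℝ Set.univ h)
    (hG : StrongConvexOn Set.univ t⁻¹ G) (hGc : LowerSemicontinuous G)
    -- the Fenchel conjugate of `G` (real-valued since `G` is strongly convex)
    (Gstar : EuclideanSpace ℝ (Fin d) → ℝ)
    (hGstar : ∀ y, Gstar y = ⨆ u, (⟪y, u⟫ - G u))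
    -- the dual objective `φ(w) = G*(A* w) - ⟪b, w⟫ + h*(w)`, with `h*` extended-real-valued
    (φ : EuclideanSpace ℝ (Fin m) → EReal)
    (hφ : ∀ w, φ w = ((Gstar ((ContinuousLinearMap.adjoint A) w) - ⟪b, w⟫ : ℝ) : EReal) +
        ⨆ z, (((⟪w, z⟫ - h z : ℝ) : EReal)))
    (w ζ : EuclideanSpace ℝ (Fin m))
    (hdom : φ w ≠ ⊤)
    (hζ : ∀ u, φ w + ((⟪ζ, u - w⟫ : ℝ) : EReal) ≤ φ u)
    (xbar : EuclideanSpace ℝ (Fin d))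
    (hxbar : HasGradientAt Gstar xbar ((ContinuousLinearMap.adjoint A) w)) :
    ∀ z, h (ζ + b - A xbar) + G xbar ≤ h (ζ + b - A z) + G z := by
  set y := ContinuousLinearMap.adjoint A w
  have hGbdd := hG.bddAbove_range_inner_sub (inv_pos.2 ht) hGc
  have hGconj : ∀ u, fenchelConjugate G u = Gstar u := fun u => by
    rw [hGstar, fenchelConjugate_eq_coe_ciSup (hGbdd u)]
  have hGxbar : G xbar + Gstar y ≤ ⟪xbar, y⟫ :=
    (hG.convexOn fun r => by dsimp; positivity).add_fenchelConjugate_le_inner hGc (hGconj y)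
      (hasSubgradientAt_fenchelConjugate_of_hasGradientAt hGconj hxbar)
  have hφ' : φ = fun u => ((Gstar (ContinuousLinearMap.adjoint A u) - ⟪b, u⟫ : ℝ) : EReal) +
      fenchelConjugate h u := funext hφ
  subst hφ'
  obtain ⟨s, hs⟩ : ∃ s : ℝ, fenchelConjugate h w = s := by
    refine ⟨_, (EReal.coe_toReal (fun htop => hdom ?_) (fenchelConjugate_ne_bot h w)).symm⟩
    simp only [htop, EReal.coe_add_top]
  have hη : HasSubgradientAt (fenchelConjugate h) (ζ + b - A xbar) w := by
    convert hasSubgradientAt_fenchelConjugate_sub_gradient (hxbar.comp_adjoint_sub_inner b)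
      (hs ▸ EReal.coe_ne_top s) hζ using 1
    abel
  have hhη : h (ζ + b - A xbar) + s ≤ ⟪ζ + b - A xbar, w⟫ :=
    hh.add_fenchelConjugate_le_inner
      (continuousOn_univ.1 (hh.continuousOn isOpen_univ)).lowerSemicontinuous hs hη
  intro z
  have hhz : ⟪w, ζ + b - A z⟫ - h (ζ + b - A z) ≤ s := fenchelConjugate_le_coe_iff.1 hs.le _
  have hGz : ⟪y, z⟫ - G z ≤ Gstar y := hGstar y ▸ le_ciSup (hGbdd y) z
  simp only [y, ContinuousLinearMap.adjoint_inner_left, ContinuousLinearMap.adjoint_inner_right,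
    real_inner_comm w (A xbar)] at hGz hGxbar
  simp only [inner_sub_right, inner_add_right, real_inner_comm w] at hhz hhη
  linarith
end

section
/- Suppose x⁺ minimizes z ↦ g(z) + h(ζ + c(x) + ∇c(x)(z−x)) + ‖z−x‖²/(2t) for some vector ζ, where h is L-Lipschitz and convex and g is proper closed convex. Then ‖G_t(x)‖² ≤ 8Lt⁻¹‖ζ‖ + 2‖t⁻¹(x⁺−x)‖², where G_t(x) = t⁻¹(x − S_t(x)) with S_t(x) the minimizer of the unperturbed model g(·)+h(c(x)+∇c(x)(·−x))+‖·−x‖²/(2t). -/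
/-- If `x⁺` minimizes the `ζ`-perturbed prox-linear model
`z ↦ g z + h (ζ + c x + ∇c(x)(z - x)) + ‖z - x‖²/(2t)` with `h` convex and `L`-Lipschitz, then
`‖G_t(x)‖² ≤ 8 L t⁻¹ ‖ζ‖ + 2 ‖t⁻¹ (x⁺ - x)‖²`, where `G_t(x) = t⁻¹ (x - S_t(x))` and `S_t(x)`
minimizes the unperturbed model. -/
theorem perturbed_minimizer_prox_gradient_bound {d m : ℕ}
    (g : EuclideanSpace ℝ (Fin d) → ℝ)
    (h : EuclideanSpace ℝ (Fin m) → ℝ)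
    (c : EuclideanSpace ℝ (Fin d) → EuclideanSpace ℝ (Fin m))
    (L t : ℝ) (hL : 0 ≤ L) (ht : 0 < t)
    (hg : ConvexOn ℝ Set.univ g) (hgc : LowerSemicontinuous g)
    (hh : ConvexOn ℝ Set.univ h)
    (hhL : ∀ u v, |h u - h v| ≤ L * ‖u - v‖)
    (hc : ContDiff ℝ 1 c)
    (x xplus xs : EuclideanSpace ℝ (Fin d)) (ζ : EuclideanSpace ℝ (Fin m))
    (hplus : ∀ z, g xplus + h (ζ + c x + fderiv ℝ c x (xplus - x)) + ‖xplus - x‖ ^ 2 / (2 * t) ≤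
        g z + h (ζ + c x + fderiv ℝ c x (z - x)) + ‖z - x‖ ^ 2 / (2 * t))
    (hxs : ∀ z, g xs + h (c x + fderiv ℝ c x (xs - x)) + ‖xs - x‖ ^ 2 / (2 * t) ≤
        g z + h (c x + fderiv ℝ c x (z - x)) + ‖z - x‖ ^ 2 / (2 * t)) :
    ‖t⁻¹ • (x - xs)‖ ^ 2 ≤ 8 * L * t⁻¹ * ‖ζ‖ + 2 * ‖t⁻¹ • (xplus - x)‖ ^ 2 := by
  set A := fderiv ℝ c x with hA
  set u := xs - x with hu
  set v := xplus - x with hv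
  set w := (1/2 : ℝ) • xs + (1/2 : ℝ) • xplus with hw
  have hwx : w - x = (1/2 : ℝ) • u + (1/2 : ℝ) • v := by
    simp only [hw, hu, hv]; module
  have hAw : A (w - x) = (1/2 : ℝ) • A u + (1/2 : ℝ) • A v := by
    rw [hwx, map_add, map_smul, map_smul]
  -- affine images are midpoints
  have haff1 : c x + A (w - x) = (1/2 : ℝ) • (c x + A u) + (1/2 : ℝ) • (c x + A v) := by
    rw [hAw]; module
  have haff2 : ζ + c x + A (w - x)
      = (1/2 : ℝ) • (ζ + c x + A u) + (1/2 : ℝ) • (ζ + c x + A v) := by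
    rw [hAw]; module
  have half : (0:ℝ) ≤ 1/2 := by norm_num
  have hsum : (1/2 : ℝ) + 1/2 = 1 := by norm_num
  -- convexity inequalities
  have hgw : g w ≤ (1/2) * g xs + (1/2) * g xplus :=
    hg.2 (Set.mem_univ xs) (Set.mem_univ xplus) half half hsum
  have hhw1 : h (c x + A (w - x)) ≤ (1/2) * h (c x + A u) + (1/2) * h (c x + A v) := by
    rw [haff1]
    exact hh.2 (Set.mem_univ _) (Set.mem_univ _) half half hsum
  have hhw2 : h (ζ + c x + A (w - x))
      ≤ (1/2) * h (ζ + c x + A u) + (1/2) * h (ζ + c x + A v) := by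
    rw [haff2]
    exact hh.2 (Set.mem_univ _) (Set.mem_univ _) half half hsum
  -- parallelogram
  have hQw : ‖w - x‖ ^ 2 = (‖u‖^2 + ‖v‖^2) / 2 - ‖u - v‖^2 / 4 := by
    have h1 : w - x = (1/2 : ℝ) • (u + v) := by rw [hwx]; module
    have h2 : ‖w - x‖^2 = (1/4) * ‖u + v‖^2 := by
      rw [h1, norm_smul]
      simp [Real.norm_eq_abs]
      ring
    have h3 : ‖u + v‖^2 + ‖u - v‖^2 = 2 * ‖u‖^2 + 2 * ‖v‖^2 := by
      have := @norm_add_sq_real (EuclideanSpace ℝ (Fin d)) _ _ u v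
      have := @norm_sub_sq_real (EuclideanSpace ℝ (Fin d)) _ _ u v
      linarith
    linarith
  -- Lipschitz bounds
  have hlip1 : h (c x + A v) - h (ζ + c x + A v) ≤ L * ‖ζ‖ := by
    have := hhL (c x + A v) (ζ + c x + A v)
    have hn : ‖(c x + A v) - (ζ + c x + A v)‖ = ‖ζ‖ := by
      have : (c x + A v) - (ζ + c x + A v) = -ζ := by module
      rw [this, norm_neg]
    rw [hn] at this
    exact (abs_le.mp this).2
  have hlip2 : h (ζ + c x + A u) - h (c x + A u) ≤ L * ‖ζ‖ := by
    have := hhL (ζ + c x + A u) (c x + A u)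
    have hn : ‖(ζ + c x + A u) - (c x + A u)‖ = ‖ζ‖ := by
      have : (ζ + c x + A u) - (c x + A u) = ζ := by module
      rw [this]
    rw [hn] at this
    exact (abs_le.mp this).2
  -- minimality at w
  have h1 := hxs w
  have h2 := hplus w
  -- key: ‖u - v‖² ≤ 4 t L ‖ζ‖
  have ht0 : t ≠ 0 := ht.ne'
  have key : ‖u - v‖ ^ 2 ≤ 4 * t * (L * ‖ζ‖) := by
    have hsum2 : ‖u‖^2/(2*t) + ‖v‖^2/(2*t) - 2*(‖w - x‖^2/(2*t)) ≤ L * ‖ζ‖ := by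
      linarith
    rw [hQw] at hsum2
    have heq : ‖u‖^2/(2*t) + ‖v‖^2/(2*t)
        - 2*(((‖u‖^2 + ‖v‖^2)/2 - ‖u - v‖^2/4)/(2*t)) = ‖u - v‖^2/(4*t) := by
      field_simp
      ring
    rw [heq] at hsum2
    have h4t : (0:ℝ) < 4 * t := by linarith
    calc ‖u - v‖^2 = (‖u - v‖^2/(4*t)) * (4*t) := by field_simp
      _ ≤ (L * ‖ζ‖) * (4*t) := mul_le_mul_of_nonneg_right hsum2 h4t.le
      _ = 4 * t * (L * ‖ζ‖) := by ring
  -- triangle inequality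
  have htri : ‖x - xs‖ ^ 2 ≤ 2 * ‖v‖^2 + 2 * ‖u - v‖^2 := by
    have h1 : ‖x - xs‖ ≤ ‖v‖ + ‖u - v‖ := by
      have heq : x - xs = -v + -(u - v) := by simp only [hu, hv]; module
      rw [heq]
      calc ‖-v + -(u - v)‖ ≤ ‖-v‖ + ‖-(u - v)‖ := norm_add_le _ _
        _ = ‖v‖ + ‖u - v‖ := by rw [norm_neg, norm_neg]
    have hsq : ‖x - xs‖ ^ 2 ≤ (‖v‖ + ‖u - v‖) ^ 2 :=
      pow_le_pow_left₀ (norm_nonneg _) h1 2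
    have h2ab : 2 * ‖v‖ * ‖u - v‖ ≤ ‖v‖ ^ 2 + ‖u - v‖ ^ 2 := two_mul_le_add_sq _ _
    have hexp : (‖v‖ + ‖u - v‖) ^ 2 = ‖v‖^2 + 2 * ‖v‖ * ‖u - v‖ + ‖u - v‖^2 := by ring
    linarith
  have hns : ‖t⁻¹ • (x - xs)‖ = t⁻¹ * ‖x - xs‖ := by
    rw [norm_smul, Real.norm_eq_abs, abs_of_pos (inv_pos.mpr ht)]
  have hnp : ‖t⁻¹ • v‖ = t⁻¹ * ‖v‖ := by
    rw [norm_smul, Real.norm_eq_abs, abs_of_pos (inv_pos.mpr ht)]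
  rw [hns, hnp]
  have hcomb : ‖x - xs‖^2 ≤ 2*‖v‖^2 + 8*t*(L*‖ζ‖) := by linarith
  calc (t⁻¹ * ‖x - xs‖)^2 = t⁻¹^2 * ‖x - xs‖^2 := by ring
    _ ≤ t⁻¹^2 * (2*‖v‖^2 + 8*t*(L*‖ζ‖)) := mul_le_mul_of_nonneg_left hcomb (sq_nonneg _)
    _ = 8 * L * t⁻¹ * ‖ζ‖ + 2 * (t⁻¹ * ‖v‖)^2 := by field_simp; ring
end

section
/- Let h : R^m → R be convex and L-Lipschitz, t, ν > 0. Then prox_{t h_ν}(x) = (ν/(t+ν))·x + (t/(t+ν))·prox_{(t+ν)h}(x), where h_ν is the Moreau envelope of h. -/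
/-!
Write `M` for the optimal value of `u ↦ h u + ‖u - x‖² / (2(t+ν))`, attained at `p`. Completing the
square,
`‖u - z‖²/(2ν) + ‖z - x‖²/(2t) = ‖u - x‖²/(2(t+ν)) + ‖(t+ν)z - (νx + tu)‖²/(2νt(t+ν))`,
so `h_ν(z) + ‖z - x‖²/(2t) ≥ M`, with equality at `z = (νx + tp)/(t+ν)` (take `u = p`).
Since `h` is convex, the objective defining `p` grows quadratically away from `p`; together with the
second square this bounds `h_ν(z) + ‖z - x‖²/(2t) - M` below by a multiple of
`‖(t+ν)z - (νx + tp)‖²`, so this point is the only minimiser.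
-/

open Set

variable {E : Type*} [NormedAddCommGroup E] [InnerProductSpace ℝ E]

theorem norm_sub_sq_div_add_norm_sub_sq_div_eq {t ν : ℝ} (ht : t ≠ 0) (hν : ν ≠ 0)
    (htν : t + ν ≠ 0) (u z x : E) :
    ‖u - z‖ ^ 2 / (2 * ν) + ‖z - x‖ ^ 2 / (2 * t) =
      ‖u - x‖ ^ 2 / (2 * (t + ν)) +
        ‖(t + ν) • z - (ν • x + t • u)‖ ^ 2 / (2 * ν * t * (t + ν)) := by
  have hux : u - x = (u - z) + (z - x) := by abel
  have hres : (t + ν) • z - (ν • x + t • u) = ν • (z - x) - t • (u - z) := by module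
  rw [hux, hres, norm_add_sq_real (u - z), norm_sub_sq_real (ν • (z - x)), norm_smul, norm_smul,
    real_inner_smul_left, real_inner_smul_right, Real.norm_eq_abs, Real.norm_eq_abs, mul_pow,
    mul_pow, sq_abs, sq_abs, real_inner_comm (u - z)]
  field_simp
  ring

theorem ConvexOn.prox_objective_quadratic_growth {f : E → ℝ} (hf : ConvexOn ℝ univ f) {c : ℝ}
    {x p : E} (hp : ∀ z, f p + ‖p - x‖ ^ 2 / (2 * c) ≤ f z + ‖z - x‖ ^ 2 / (2 * c)) (u : E) :
    f p + ‖p - x‖ ^ 2 / (2 * c) + ‖u - p‖ ^ 2 / (4 * c) ≤ f u + ‖u - x‖ ^ 2 / (2 * c) := by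
  set w : E := (1 / 2 : ℝ) • u + (1 / 2 : ℝ) • p
  have hfw : f w ≤ f u / 2 + f p / 2 := by
    have := hf.2 (mem_univ u) (mem_univ p) (by norm_num) (by norm_num) (add_halves 1)
    simp only [smul_eq_mul] at this
    linarith
  have hwx : ‖w - x‖ ^ 2 = ‖u - x‖ ^ 2 / 2 + ‖p - x‖ ^ 2 / 2 - ‖u - p‖ ^ 2 / 4 := by
    have hsum : w - x = (1 / 2 : ℝ) • ((u - x) + (p - x)) := by module
    have hdiff : u - p = (u - x) - (p - x) := by abel
    have := parallelogram_law_with_norm ℝ (u - x) (p - x)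
    rw [hsum, hdiff, norm_smul, mul_pow, Real.norm_eq_abs, abs_of_pos (by norm_num)]
    linarith
  have hwx' :
      ‖w - x‖ ^ 2 / c = ‖u - x‖ ^ 2 / c / 2 + ‖p - x‖ ^ 2 / c / 2 - ‖u - p‖ ^ 2 / c / 4 := by
    rw [hwx]; ring
  have := hp w
  simp only [div_mul_eq_div_div_swap] at this ⊢
  linarith

theorem ConvexOn.prox_objective_add_le_moreau_objective {f : E → ℝ} (hf : ConvexOn ℝ univ f)
    {t ν : ℝ} (ht : 0 < t) (hν : 0 < ν) {x p : E}
    (hp : ∀ z, f p + ‖p - x‖ ^ 2 / (2 * (t + ν)) ≤ f z + ‖z - x‖ ^ 2 / (2 * (t + ν))) (z u : E) :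
    f p + ‖p - x‖ ^ 2 / (2 * (t + ν)) +
        ‖(t + ν) • z - (ν • x + t • p)‖ ^ 2 / (4 * t * (t + ν) * (2 * t + ν)) ≤
      f u + ‖u - z‖ ^ 2 / (2 * ν) + ‖z - x‖ ^ 2 / (2 * t) := by
  have htν : 0 < t + ν := by linarith
  have hsplit := norm_sub_sq_div_add_norm_sub_sq_div_eq ht.ne' hν.ne' htν.ne' u z x
  have hgrowth := hf.prox_objective_quadratic_growth hp u
  have hv : (t + ν) • z - (ν • x + t • p) = t • (u - p) + ((t + ν) • z - (ν • x + t • u)) := by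
    module
  set b := (t + ν) • z - (ν • x + t • u)
  have hpar : ‖t • (u - p) + b‖ ^ 2 ≤ 2 * t ^ 2 * ‖u - p‖ ^ 2 + 2 * ‖b‖ ^ 2 := by
    have := parallelogram_law_with_norm ℝ (t • (u - p)) b
    rw [norm_smul, mul_pow, Real.norm_eq_abs, sq_abs] at this
    nlinarith [sq_nonneg ‖t • (u - p) - b‖]
  have hK : 0 < 4 * t * (t + ν) * (2 * t + ν) := by positivity
  -- the weight `4t(t+ν)(2t+ν)` dominates both coefficients of `‖a + b‖² ≤ 2‖a‖² + 2‖b‖²`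
  have hweights : (‖u - p‖ ^ 2 / (4 * (t + ν)) + ‖b‖ ^ 2 / (2 * ν * t * (t + ν))) *
        (4 * t * (t + ν) * (2 * t + ν)) =
      2 * t ^ 2 * ‖u - p‖ ^ 2 + 2 * ‖b‖ ^ 2 + (t * ν * ‖u - p‖ ^ 2 + 4 * t / ν * ‖b‖ ^ 2) := by
    field_simp
    ring
  have hresidual : ‖t • (u - p) + b‖ ^ 2 / (4 * t * (t + ν) * (2 * t + ν)) ≤
      ‖u - p‖ ^ 2 / (4 * (t + ν)) + ‖b‖ ^ 2 / (2 * ν * t * (t + ν)) := by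
    rw [div_le_iff₀ hK, hweights]
    exact hpar.trans (le_add_of_nonneg_right (by positivity))
  rw [hv]
  linarith

theorem prox_of_moreau_envelope_general {m : ℕ}
    (h : EuclideanSpace ℝ (Fin m) → ℝ) (t ν : ℝ)
    (ht : 0 < t) (hν : 0 < ν)
    (hh : ConvexOn ℝ Set.univ h)
    (x p q : EuclideanSpace ℝ (Fin m))
    -- `p = prox_{(t+ν) h}(x)`
    (hp : ∀ z, h p + ‖p - x‖ ^ 2 / (2 * (t + ν)) ≤ h z + ‖z - x‖ ^ 2 / (2 * (t + ν)))
    -- `q = prox_{t h_ν}(x)` where `h_ν` is the Moreau envelope of `h`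
    (hq : ∀ z, (⨅ u, h u + ‖u - q‖ ^ 2 / (2 * ν)) + ‖q - x‖ ^ 2 / (2 * t) ≤
        (⨅ u, h u + ‖u - z‖ ^ 2 / (2 * ν)) + ‖z - x‖ ^ 2 / (2 * t)) :
    q = (ν / (t + ν)) • x + (t / (t + ν)) • p := by
  have htν : 0 < t + ν := by linarith
  have hK : 0 < 4 * t * (t + ν) * (2 * t + ν) := by positivity
  have lower := hh.prox_objective_add_le_moreau_objective ht hν hp
  have bdd (z) : BddBelow (range fun u => h u + ‖u - z‖ ^ 2 / (2 * ν)) :=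
    ⟨h p + ‖p - x‖ ^ 2 / (2 * (t + ν)) - ‖z - x‖ ^ 2 / (2 * t), by
      rintro _ ⟨u, rfl⟩
      linarith [lower z u, div_nonneg (sq_nonneg ‖(t + ν) • z - (ν • x + t • p)‖) hK.le]⟩
  set q' := (ν / (t + ν)) • x + (t / (t + ν)) • p
  have hq' : (t + ν) • q' = ν • x + t • p := by
    simp only [q', smul_add, smul_smul, mul_div_cancel₀ _ htν.ne']
  have value_at_q' : (⨅ u, h u + ‖u - q'‖ ^ 2 / (2 * ν)) + ‖q' - x‖ ^ 2 / (2 * t) ≤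
      h p + ‖p - x‖ ^ 2 / (2 * (t + ν)) := by
    have := norm_sub_sq_div_add_norm_sub_sq_div_eq ht.ne' hν.ne' htν.ne' p q' x
    rw [hq', sub_self, norm_zero, zero_pow two_ne_zero, zero_div, add_zero] at this
    linarith [ciInf_le (bdd q') p]
  have value_at_q : h p + ‖p - x‖ ^ 2 / (2 * (t + ν)) - ‖q - x‖ ^ 2 / (2 * t) +
        ‖(t + ν) • q - (ν • x + t • p)‖ ^ 2 / (4 * t * (t + ν) * (2 * t + ν)) ≤
      ⨅ u, h u + ‖u - q‖ ^ 2 / (2 * ν) :=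
    le_ciInf fun u => by linarith [lower q u]
  have hres : ‖(t + ν) • q - (ν • x + t • p)‖ ^ 2 ≤ 0 := by
    rw [← zero_mul (4 * t * (t + ν) * (2 * t + ν)), ← div_le_iff₀ hK]
    linarith [hq q']
  rw [sq_nonpos_iff, norm_eq_zero, sub_eq_zero, ← hq'] at hres
  exact smul_right_injective _ htν.ne' hres

/-- Proximal map of the Moreau envelope: for `h` convex and `L`-Lipschitz and `t, ν > 0`,
`prox_{t h_ν}(x) = (ν/(t+ν)) x + (t/(t+ν)) prox_{(t+ν) h}(x)`. -/
theorem prox_of_moreau_envelope {m : ℕ}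
    (h : EuclideanSpace ℝ (Fin m) → ℝ) (L t ν : ℝ)
    (hL : 0 ≤ L) (ht : 0 < t) (hν : 0 < ν)
    (hh : ConvexOn ℝ Set.univ h)
    (hhL : ∀ u v, |h u - h v| ≤ L * ‖u - v‖)
    (x p q : EuclideanSpace ℝ (Fin m))
    -- `p = prox_{(t+ν) h}(x)`
    (hp : ∀ z, h p + ‖p - x‖ ^ 2 / (2 * (t + ν)) ≤ h z + ‖z - x‖ ^ 2 / (2 * (t + ν)))
    -- `q = prox_{t h_ν}(x)` where `h_ν` is the Moreau envelope of `h`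
    (hq : ∀ z, (⨅ u, h u + ‖u - q‖ ^ 2 / (2 * ν)) + ‖q - x‖ ^ 2 / (2 * t) ≤
        (⨅ u, h u + ‖u - z‖ ^ 2 / (2 * ν)) + ‖z - x‖ ^ 2 / (2 * t)) :
    q = (ν / (t + ν)) • x + (t / (t + ν)) • p :=
  prox_of_moreau_envelope_general h t ν ht hν hh x p q hp hq
end

section
/- Let h be convex L-Lipschitz, t > 0, and define for the composite problem the two prox-linear steps x⁺ = argmin_z { h(c(x)+∇c(x)(z−x)) + g(z) + ‖z−x‖²/(2t) } and x̂ = argmin_z { h_ν(c(x)+∇c(x)(z−x)) + g(z) + ‖z−x‖²/(2t) }, where h_ν is the Moreau envelope. Then t⁻¹‖x⁺ − x‖ ≤ t⁻¹‖x̂ − x‖ + √(L²ν/(2t)). -/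
/-!
Both steps minimize a convex model plus `‖z - x‖² / (2t)`, a `t⁻¹`-strongly convex function, so
each objective grows at least like `‖z - p‖² / (2t)` away from its minimizer `p`. Adding the
growth inequality for `x⁺` at `x̂` to the one for `x̂` at `x⁺`, the proximal terms cancel and
`‖x⁺ - x̂‖² / t` is bounded by the gap between the two models, i.e. by `sup (h - h_ν) ≤ L² ν / 2`.
The triangle inequality finishes.
-/

open Set Filter Topology

theorem ConvexOn.comp_add_map_sub {E F : Type*} [AddCommGroup E] [Module ℝ E]
    [AddCommGroup F] [Module ℝ F] {f : F → ℝ} (hf : ConvexOn ℝ univ f) (D : E →ₗ[ℝ] F)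
    (x : E) (y : F) : ConvexOn ℝ univ fun z => f (y + D (z - x)) := by
  simpa [Function.comp_def, sub_eq_neg_add] using
    ((hf.translate_right y).comp_linearMap D).translate_right (-x)

theorem ConvexOn.ciInf_fst {E F : Type*} [AddCommGroup E] [Module ℝ E]
    [AddCommGroup F] [Module ℝ F] {f : E × F → ℝ} (hf : ConvexOn ℝ univ f)
    (hbdd : ∀ w, BddBelow (range fun u => f (u, w))) :
    ConvexOn ℝ univ fun w => ⨅ u, f (u, w) := by
  refine ⟨convex_univ, fun w₁ _ w₂ _ a b ha hb hab => le_of_forall_pos_le_add fun ε hε => ?_⟩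
  obtain ⟨u₁, hu₁⟩ := exists_lt_of_ciInf_lt (lt_add_of_pos_right (⨅ u, f (u, w₁)) hε)
  obtain ⟨u₂, hu₂⟩ := exists_lt_of_ciInf_lt (lt_add_of_pos_right (⨅ u, f (u, w₂)) hε)
  calc ⨅ u, f (u, a • w₁ + b • w₂) ≤ f (a • (u₁, w₁) + b • (u₂, w₂)) := ciInf_le (hbdd _) _
    _ ≤ a * f (u₁, w₁) + b * f (u₂, w₂) := hf.2 trivial trivial ha hb hab
    _ ≤ a * (⨅ u, f (u, w₁)) + b * (⨅ u, f (u, w₂)) + ε := by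
      linear_combination a * hu₁.le + b * hu₂.le + ε * hab

theorem StrongConvexOn.add_sq_norm_sub_le_of_isMinOn {E : Type*} [NormedAddCommGroup E]
    [NormedSpace ℝ E] {s : Set E} {m : ℝ} {f : E → ℝ} {p z : E} (hf : StrongConvexOn s m f)
    (hp : IsMinOn f s p) (hps : p ∈ s) (hz : z ∈ s) : f p + m / 2 * ‖z - p‖ ^ 2 ≤ f z := by
  set M := m / 2 * ‖z - p‖ ^ 2
  -- compare `f p` with `f` at `(1 - l) • p + l • z`, then let `l → 0`
  have key : ∀ l ∈ Ioo (0 : ℝ) 1, f p + (1 - l) * M ≤ f z := by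
    rintro l ⟨hl₀, hl₁⟩
    have hcomb := hf.2 hps hz (sub_nonneg.2 hl₁.le) hl₀.le (sub_add_cancel 1 l)
    have hmin := isMinOn_iff.1 hp _ (hf.1 hps hz (sub_nonneg.2 hl₁.le) hl₀.le (sub_add_cancel 1 l))
    rw [norm_sub_rev, smul_eq_mul, smul_eq_mul] at hcomb
    refine le_of_mul_le_mul_left ?_ hl₀
    linear_combination hmin + hcomb
  have hlim : Tendsto (fun l : ℝ => f p + (1 - l) * M) (𝓝[>] 0) (𝓝 (f p + M)) := by
    have : Continuous fun l : ℝ => f p + (1 - l) * M := by fun_prop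
    simpa using (this.tendsto 0).mono_left nhdsWithin_le_nhds
  exact le_of_tendsto hlim (eventually_of_mem (Ioo_mem_nhdsGT one_pos) key)

theorem ConvexOn.strongConvexOn_add_sq_norm_sub_div {E : Type*} [NormedAddCommGroup E]
    [InnerProductSpace ℝ E] {s : Set E} {φ : E → ℝ} (hφ : ConvexOn ℝ s φ) (x : E) (t : ℝ) :
    StrongConvexOn s t⁻¹ fun z => φ z + ‖z - x‖ ^ 2 / (2 * t) := by
  rw [strongConvexOn_iff_convex]
  refine ((hφ.add ((t⁻¹ • -innerₛₗ ℝ x).convexOn hφ.1)).add_const (‖x‖ ^ 2 / (2 * t))).congr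
    fun z _ => ?_
  simp only [Pi.add_apply, norm_sub_sq_real, LinearMap.smul_apply, LinearMap.neg_apply,
    innerₛₗ_apply_apply, real_inner_comm x z, smul_eq_mul]
  ring

theorem ConvexOn.add_sq_norm_sub_div_le_of_isMinOn {E : Type*} [NormedAddCommGroup E]
    [InnerProductSpace ℝ E] {s : Set E} {φ : E → ℝ} {x p z : E} {t : ℝ} (hφ : ConvexOn ℝ s φ)
    (hp : IsMinOn (fun z => φ z + ‖z - x‖ ^ 2 / (2 * t)) s p) (hps : p ∈ s) (hz : z ∈ s) :
    φ p + ‖p - x‖ ^ 2 / (2 * t) + ‖z - p‖ ^ 2 / (2 * t) ≤ φ z + ‖z - x‖ ^ 2 / (2 * t) := by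
  have growth :=
    (hφ.strongConvexOn_add_sq_norm_sub_div x t).add_sq_norm_sub_le_of_isMinOn hp hps hz
  have hmodulus : t⁻¹ / 2 * ‖z - p‖ ^ 2 = ‖z - p‖ ^ 2 / (2 * t) := by ring
  linarith

theorem norm_sub_sq_le_of_isMinOn_prox {E : Type*} [NormedAddCommGroup E]
    [InnerProductSpace ℝ E] {φ₁ φ₂ : E → ℝ} {x p₁ p₂ : E} {t δ : ℝ} (ht : 0 < t)
    (hφ₁ : ConvexOn ℝ univ φ₁) (hφ₂ : ConvexOn ℝ univ φ₂) (h₂₁ : ∀ z, φ₂ z ≤ φ₁ z)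
    (h₁₂ : ∀ z, φ₁ z ≤ φ₂ z + δ)
    (hp₁ : IsMinOn (fun z => φ₁ z + ‖z - x‖ ^ 2 / (2 * t)) univ p₁)
    (hp₂ : IsMinOn (fun z => φ₂ z + ‖z - x‖ ^ 2 / (2 * t)) univ p₂) :
    ‖p₁ - p₂‖ ^ 2 ≤ t * δ := by
  have grow₁ := hφ₁.add_sq_norm_sub_div_le_of_isMinOn hp₁ trivial (mem_univ p₂)
  have grow₂ := hφ₂.add_sq_norm_sub_div_le_of_isMinOn hp₂ trivial (mem_univ p₁)
  rw [norm_sub_rev p₂ p₁] at grow₁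
  have hsum : ‖p₁ - p₂‖ ^ 2 / (2 * t) + ‖p₁ - p₂‖ ^ 2 / (2 * t) = ‖p₁ - p₂‖ ^ 2 / t := by
    field_simp; ring
  have : ‖p₁ - p₂‖ ^ 2 / t ≤ δ := by linarith [h₂₁ p₁, h₁₂ p₂]
  rwa [div_le_iff₀ ht, mul_comm] at this

noncomputable def moreauEnvelope {F : Type*} [NormedAddCommGroup F] (h : F → ℝ) (ν : ℝ)
    (w : F) : ℝ :=
  ⨅ u, h u + ‖u - w‖ ^ 2 / (2 * ν)

section MoreauEnvelope

variable {F : Type*} [NormedAddCommGroup F] {h : F → ℝ} {L ν : ℝ}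

theorem sub_le_add_sq_norm_sub_div (hν : 0 < ν) (hhL : ∀ u v, h u - h v ≤ L * ‖u - v‖)
    (w u : F) : h w - L ^ 2 * ν / 2 ≤ h u + ‖u - w‖ ^ 2 / (2 * ν) := by
  have hLip := hhL w u
  rw [norm_sub_rev] at hLip
  have amgm : L * ‖u - w‖ - L ^ 2 * ν / 2 ≤ ‖u - w‖ ^ 2 / (2 * ν) := by
    rw [le_div_iff₀ (by positivity)]
    nlinarith [sq_nonneg (‖u - w‖ - L * ν)]
  linarith

theorem bddBelow_range_add_sq_norm_sub_div (hν : 0 < ν)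
    (hhL : ∀ u v, h u - h v ≤ L * ‖u - v‖) (w : F) :
    BddBelow (range fun u => h u + ‖u - w‖ ^ 2 / (2 * ν)) :=
  ⟨h w - L ^ 2 * ν / 2, forall_mem_range.2 (sub_le_add_sq_norm_sub_div hν hhL w)⟩

theorem moreauEnvelope_le (hν : 0 < ν) (hhL : ∀ u v, h u - h v ≤ L * ‖u - v‖) (w : F) :
    moreauEnvelope h ν w ≤ h w := by
  simpa [moreauEnvelope] using ciInf_le (bddBelow_range_add_sq_norm_sub_div hν hhL w) w

theorem sub_le_moreauEnvelope (hν : 0 < ν) (hhL : ∀ u v, h u - h v ≤ L * ‖u - v‖) (w : F) :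
    h w - L ^ 2 * ν / 2 ≤ moreauEnvelope h ν w :=
  le_ciInf (sub_le_add_sq_norm_sub_div hν hhL w)

theorem convexOn_moreauEnvelope [NormedSpace ℝ F] (hν : 0 < ν) (hh : ConvexOn ℝ univ h)
    (hhL : ∀ u v, h u - h v ≤ L * ‖u - v‖) : ConvexOn ℝ univ (moreauEnvelope h ν) := by
  have hsq : ConvexOn ℝ univ fun p : F × F => (2 * ν)⁻¹ • ‖p.1 - p.2‖ ^ 2 :=
    ((convexOn_univ_norm.pow (fun _ _ => norm_nonneg _) 2).comp_linearMap
      (LinearMap.fst ℝ F F - LinearMap.snd ℝ F F)).smul (by positivity)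
  have hjoint : ConvexOn ℝ univ fun p : F × F => h p.1 + ‖p.1 - p.2‖ ^ 2 / (2 * ν) :=
    ((hh.comp_linearMap (LinearMap.fst ℝ F F)).add hsq).congr fun p _ => by
      simp [div_eq_inv_mul]
  exact hjoint.ciInf_fst (bddBelow_range_add_sq_norm_sub_div hν hhL)

end MoreauEnvelope

theorem smoothing_prox_gradient_comparison_general {d m : ℕ}
    (g : EuclideanSpace ℝ (Fin d) → ℝ)
    (h : EuclideanSpace ℝ (Fin m) → ℝ)
    (c : EuclideanSpace ℝ (Fin d) → EuclideanSpace ℝ (Fin m))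
    (L t ν : ℝ) (ht : 0 < t) (hν : 0 < ν)
    (hg : ConvexOn ℝ Set.univ g)
    (hh : ConvexOn ℝ Set.univ h)
    (hhL : ∀ u v, |h u - h v| ≤ L * ‖u - v‖)
    (x xplus xhat : EuclideanSpace ℝ (Fin d))
    (hxplus : ∀ z,
      h (c x + fderiv ℝ c x (xplus - x)) + g xplus + ‖xplus - x‖ ^ 2 / (2 * t) ≤
        h (c x + fderiv ℝ c x (z - x)) + g z + ‖z - x‖ ^ 2 / (2 * t))
    (hxhat : ∀ z,
      (⨅ u, h u + ‖u - (c x + fderiv ℝ c x (xhat - x))‖ ^ 2 / (2 * ν)) + g xhat +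
          ‖xhat - x‖ ^ 2 / (2 * t) ≤
        (⨅ u, h u + ‖u - (c x + fderiv ℝ c x (z - x))‖ ^ 2 / (2 * ν)) + g z +
          ‖z - x‖ ^ 2 / (2 * t)) :
    t⁻¹ * ‖xplus - x‖ ≤ t⁻¹ * ‖xhat - x‖ + Real.sqrt (L ^ 2 * ν / (2 * t)) := by
  have hLip : ∀ u v, h u - h v ≤ L * ‖u - v‖ := fun u v => (abs_le.1 (hhL u v)).2
  set D : EuclideanSpace ℝ (Fin d) →ₗ[ℝ] EuclideanSpace ℝ (Fin m) :=
    (fderiv ℝ c x).toLinearMap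
  have hclose : ‖xplus - xhat‖ ^ 2 ≤ t * (L ^ 2 * ν / 2) :=
    norm_sub_sq_le_of_isMinOn_prox ht ((hh.comp_add_map_sub D x (c x)).add hg)
      (((convexOn_moreauEnvelope hν hh hLip).comp_add_map_sub D x (c x)).add hg)
      (fun z => add_le_add_left (moreauEnvelope_le hν hLip _) _)
      (fun z => by
        simp only [Pi.add_apply]; linarith [sub_le_moreauEnvelope hν hLip (c x + D (z - x))])
      (isMinOn_univ_iff.2 hxplus) (isMinOn_univ_iff.2 hxhat)
  have hstep : t⁻¹ * ‖xplus - xhat‖ ≤ √(L ^ 2 * ν / (2 * t)) := by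
    refine (le_abs_self _).trans (Real.abs_le_sqrt ?_)
    calc (t⁻¹ * ‖xplus - xhat‖) ^ 2 = ‖xplus - xhat‖ ^ 2 / t ^ 2 := by ring
      _ ≤ t * (L ^ 2 * ν / 2) / t ^ 2 := by gcongr
      _ = L ^ 2 * ν / (2 * t) := by field_simp
  have htriangle := norm_sub_le_norm_sub_add_norm_sub xplus xhat x
  calc t⁻¹ * ‖xplus - x‖ ≤ t⁻¹ * ‖xplus - xhat‖ + t⁻¹ * ‖xhat - x‖ := by
        rw [← mul_add]; gcongr
    _ ≤ t⁻¹ * ‖xhat - x‖ + √(L ^ 2 * ν / (2 * t)) := by linarith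

/-- Prox-gradient comparison under smoothing (Theorem 6.3): if `x⁺` is the prox-linear step for
the composite model with `h` and `x̂` is the prox-linear step for the model with the Moreau
envelope `h_ν` in place of `h`, then `t⁻¹ ‖x⁺ - x‖ ≤ t⁻¹ ‖x̂ - x‖ + √(L²ν/(2t))`. -/
theorem smoothing_prox_gradient_comparison {d m : ℕ}
    (g : EuclideanSpace ℝ (Fin d) → ℝ)
    (h : EuclideanSpace ℝ (Fin m) → ℝ)
    (c : EuclideanSpace ℝ (Fin d) → EuclideanSpace ℝ (Fin m))
    (L t ν : ℝ) (hL : 0 ≤ L) (ht : 0 < t) (hν : 0 < ν)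
    (hg : ConvexOn ℝ Set.univ g) (hgc : LowerSemicontinuous g)
    (hh : ConvexOn ℝ Set.univ h)
    (hhL : ∀ u v, |h u - h v| ≤ L * ‖u - v‖)
    (hc : ContDiff ℝ 1 c)
    (x xplus xhat : EuclideanSpace ℝ (Fin d))
    (hxplus : ∀ z,
      h (c x + fderiv ℝ c x (xplus - x)) + g xplus + ‖xplus - x‖ ^ 2 / (2 * t) ≤
        h (c x + fderiv ℝ c x (z - x)) + g z + ‖z - x‖ ^ 2 / (2 * t))
    (hxhat : ∀ z,
      (⨅ u, h u + ‖u - (c x + fderiv ℝ c x (xhat - x))‖ ^ 2 / (2 * ν)) + g xhat +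
          ‖xhat - x‖ ^ 2 / (2 * t) ≤
        (⨅ u, h u + ‖u - (c x + fderiv ℝ c x (z - x))‖ ^ 2 / (2 * ν)) + g z +
          ‖z - x‖ ^ 2 / (2 * t)) :
    t⁻¹ * ‖xplus - x‖ ≤ t⁻¹ * ‖xhat - x‖ + Real.sqrt (L ^ 2 * ν / (2 * t)) :=
  smoothing_prox_gradient_comparison_general g h c L t ν ht hν hg hh hhL x xplus xhat hxplus hxhat
end

section
/- Let h : R^m → R be convex L-Lipschitz, c : R^d → R^m be C¹ with β-Lipschitz Jacobian, and g proper closed convex. Suppose r ≥ 0 is a convexity constant of the pair (h,c) on a convex set U, meaning h(c(y)+∇c(y)(z−y)) ≤ h(c(z)) + (r/2)‖z−y‖² for all z,y ∈ U. Then h∘c is r-weakly convex on U: for all x,y ∈ U and a ∈ [0,1], h(c(ax+(1−a)y)) ≤ a·h(c(x)) + (1−a)·h(c(y)) + r·a(1−a)‖x−y‖². -/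
/-- Convexity of the pair implies weak convexity of the composition: if `r ≥ 0` satisfies
`h(c(y) + ∇c(y)(z - y)) ≤ h(c(z)) + (r/2)‖z - y‖²` for all `z, y ∈ U` with `U` convex, then
`h ∘ c` is `r`-weakly convex on `U`. -/
theorem pair_convexity_implies_weak_convexity {d m : ℕ}
    (h : EuclideanSpace ℝ (Fin m) → ℝ)
    (c : EuclideanSpace ℝ (Fin d) → EuclideanSpace ℝ (Fin m))
    (L β r : ℝ) (hL : 0 ≤ L) (hβ : 0 ≤ β) (hr : 0 ≤ r)
    (hh : ConvexOn ℝ Set.univ h)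
    (hhL : ∀ u v, |h u - h v| ≤ L * ‖u - v‖)
    (hc : ContDiff ℝ 1 c)
    (hcβ : ∀ x y, ‖fderiv ℝ c x - fderiv ℝ c y‖ ≤ β * ‖x - y‖)
    (U : Set (EuclideanSpace ℝ (Fin d))) (hU : Convex ℝ U)
    (hpair : ∀ z ∈ U, ∀ y ∈ U,
      h (c y + fderiv ℝ c y (z - y)) ≤ h (c z) + r / 2 * ‖z - y‖ ^ 2) :
    ∀ x ∈ U, ∀ y ∈ U, ∀ a : ℝ, 0 ≤ a → a ≤ 1 →
      h (c (a • x + (1 - a) • y)) ≤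
        a * h (c x) + (1 - a) * h (c y) + r * a * (1 - a) * ‖x - y‖ ^ 2 := by
  intro x hx y hy a ha ha1
  set w := a • x + (1 - a) • y with hwdef
  have h1a : 0 ≤ 1 - a := by linarith
  have hw : w ∈ U := hU hx hy ha h1a (by ring)
  have hxw : x - w = (1 - a) • (x - y) := by
    simp only [hwdef]
    module
  have hyw : y - w = (-a) • (x - y) := by
    simp only [hwdef]
    module
  have hD := (fderiv ℝ c w).map_smul
  have key : a • (c w + fderiv ℝ c w (x - w)) + (1 - a) • (c w + fderiv ℝ c w (y - w))
      = c w := by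
    have : a • (x - w) + (1 - a) • (y - w) = 0 := by
      rw [hxw, hyw]; module
    have h2 : a • (fderiv ℝ c w (x - w)) + (1 - a) • (fderiv ℝ c w (y - w)) = 0 := by
      rw [← (fderiv ℝ c w).map_smul, ← (fderiv ℝ c w).map_smul, ← (fderiv ℝ c w).map_add,
        this, map_zero]
    rw [smul_add, smul_add]
    rw [show a • c w + a • (fderiv ℝ c w) (x - w) + ((1 - a) • c w + (1 - a) • (fderiv ℝ c w) (y - w))
      = (a • c w + (1 - a) • c w) + (a • (fderiv ℝ c w) (x - w) + (1 - a) • (fderiv ℝ c w) (y - w))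
      by module, h2, add_zero, ← add_smul]
    simp
  have hconv := hh.2 (Set.mem_univ (c w + fderiv ℝ c w (x - w)))
    (Set.mem_univ (c w + fderiv ℝ c w (y - w))) ha h1a (by ring)
  rw [key] at hconv
  simp only [smul_eq_mul] at hconv
  have h1 := hpair x hx w hw
  have h2 := hpair y hy w hw
  have hn1 : ‖x - w‖ ^ 2 = (1 - a) ^ 2 * ‖x - y‖ ^ 2 := by
    rw [hxw, norm_smul]
    simp [mul_pow, Real.norm_eq_abs, sq_abs]
  have hn2 : ‖y - w‖ ^ 2 = a ^ 2 * ‖x - y‖ ^ 2 := by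
    rw [hyw, norm_smul]
    simp [mul_pow, Real.norm_eq_abs, sq_abs]
  rw [hn1] at h1
  rw [hn2] at h2
  have hnn : 0 ≤ ‖x - y‖ ^ 2 := sq_nonneg _
  nlinarith [mul_le_mul_of_nonneg_left h1 ha, mul_le_mul_of_nonneg_left h2 h1a,
    mul_nonneg (mul_nonneg hr (mul_nonneg ha h1a)) hnn,
    mul_nonneg (mul_nonneg (mul_nonneg hr ha) h1a) (mul_nonneg (mul_nonneg ha h1a) hnn)]
end

section
/- Suppose nonnegative sequences d_i, β_i and a nondecreasing nonnegative sequence c_i satisfy d_k² ≤ d_0² + c_k + Σ_{i=1}^k β_i d_i for all k. Then for every k, d_k ≤ (1/2)Σ_{i=1}^k β_i + √( d_0² + c_k + ((1/2)Σ_{i=1}^k β_i)² ). -/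
/-- Recurrence lemma: if nonnegative sequences `d_i`, `β_i` and a nondecreasing nonnegative
sequence `c_i` satisfy `d_k² ≤ d_0² + c_k + ∑_{i=1}^k β_i d_i` for all `k`, then for every `k`,
`d_k ≤ (1/2)∑_{i=1}^k β_i + √(d_0² + c_k + ((1/2)∑_{i=1}^k β_i)²)`. -/
theorem recurrence_bound (d β c : ℕ → ℝ)
    (hd : ∀ i, 0 ≤ d i) (hβ : ∀ i, 0 ≤ β i) (hc : ∀ i, 0 ≤ c i) (hcmono : Monotone c)
    (hrec : ∀ k, d k ^ 2 ≤ d 0 ^ 2 + c k + ∑ i ∈ Finset.Icc 1 k, β i * d i) :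
    ∀ k, d k ≤ (1 / 2) * ∑ i ∈ Finset.Icc 1 k, β i +
      Real.sqrt (d 0 ^ 2 + c k + ((1 / 2) * ∑ i ∈ Finset.Icc 1 k, β i) ^ 2) := by
  intro k
  set S : ℝ := (1 / 2) * ∑ i ∈ Finset.Icc 1 k, β i with hS
  set A : ℝ := d 0 ^ 2 + c k with hA
  have hSnn : 0 ≤ S := by
    apply mul_nonneg (by norm_num)
    exact Finset.sum_nonneg fun i _ => hβ i
  have hAnn : 0 ≤ A := add_nonneg (sq_nonneg _) (hc k)
  -- pick maximizing index m ≤ k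
  obtain ⟨m, hm, hmax⟩ := Finset.exists_max_image (Finset.range (k + 1)) d
    ⟨k, Finset.self_mem_range_succ k⟩
  have hmk : m ≤ k := Nat.lt_succ_iff.mp (Finset.mem_range.mp hm)
  have hdk : d k ≤ d m := hmax k (Finset.self_mem_range_succ k)
  -- key quadratic bound on d m
  have hq : d m ^ 2 ≤ A + 2 * S * d m := by
    have h1 : ∑ i ∈ Finset.Icc 1 m, β i * d i ≤ ∑ i ∈ Finset.Icc 1 m, β i * d m := by
      apply Finset.sum_le_sum
      intro i hi
      have : i ≤ m := (Finset.mem_Icc.mp hi).2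
      exact mul_le_mul_of_nonneg_left
        (hmax i (Finset.mem_range.mpr (Nat.lt_succ_of_le (this.trans hmk)))) (hβ i)
    have h2 : ∑ i ∈ Finset.Icc 1 m, β i * d m ≤ ∑ i ∈ Finset.Icc 1 k, β i * d m :=
      Finset.sum_le_sum_of_subset_of_nonneg (Finset.Icc_subset_Icc_right hmk)
        (fun i _ _ => mul_nonneg (hβ i) (hd m))
    have h3 : ∑ i ∈ Finset.Icc 1 k, β i * d m = 2 * S * d m := by
      rw [← Finset.sum_mul, hS]; ring
    calc d m ^ 2 ≤ d 0 ^ 2 + c m + ∑ i ∈ Finset.Icc 1 m, β i * d i := hrec m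
      _ ≤ A + 2 * S * d m := by
          rw [hA]
          have := hcmono hmk
          linarith [h1.trans (h2.trans_eq h3)]
  have hsq : (d m - S) ^ 2 ≤ A + S ^ 2 := by ring_nf; ring_nf at hq; linarith
  have : d m - S ≤ Real.sqrt (A + S ^ 2) := by
    calc d m - S ≤ |d m - S| := le_abs_self _
      _ = Real.sqrt ((d m - S) ^ 2) := (Real.sqrt_sq_eq_abs _).symm
      _ ≤ Real.sqrt (A + S ^ 2) := Real.sqrt_le_sqrt hsq
  linarith
end
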